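/- arXiv:2405.04606 — 5 statements merged into one kernel-verified Lean document; each statement's English description precedes it below -/
import Mathlib

section
/- If $X \sim \mathrm{Bin}(r, p)$ and $Y \sim \mathrm{Bin}(r+1, p)$ with $0 < p < 1$ and $q < (r+1)p$ for a natural number $q \le r$, then $\Pr(Y \le q) < \Pr(X \le q)$; equivalently, $\Pr(Y \ge q+1) > \Pr(X \ge q+1)$. In words, the probability of reaching the quorum threshold is monotone increasing in the number of senders. -/
lemma tail_key (p : ℝ) : ∀ q r : ℕ, q ≤ r →
    ∑ k ∈ Finset.range (q + 1), ((r + 1).choose k : ℝ) * p ^ k * (1 - p) ^ (r + 1 - k)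
      = (∑ k ∈ Finset.range (q + 1), (r.choose k : ℝ) * p ^ k * (1 - p) ^ (r - k))
        - p * (r.choose q : ℝ) * p ^ q * (1 - p) ^ (r - q) := by
  intro q
  induction q with
  | zero =>
    intro r hr
    simp [Finset.sum_range_succ]
    ring
  | succ q ih =>
    intro r hr
    have hq : q ≤ r := le_of_lt (Nat.lt_of_succ_le hr)
    rw [Finset.sum_range_succ, ih r hq, Finset.sum_range_succ (n := q + 1)]
    have h1 : r + 1 - (q + 1) = r - q := by omega
    have h2 : r - q = (r - (q + 1)) + 1 := by omega
    have h3 : ((r + 1).choose (q + 1) : ℝ) = (r.choose q : ℝ) + (r.choose (q + 1) : ℝ) := by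
      rw [Nat.choose_succ_succ]; push_cast; ring
    rw [h1, h3, h2]
    ring

lemma total_one (p : ℝ) (r : ℕ) :
    ∑ k ∈ Finset.range (r + 1), (r.choose k : ℝ) * p ^ k * (1 - p) ^ (r - k) = 1 := by
  have h1 : (∑ k ∈ Finset.range (r + 1), (r.choose k : ℝ) * p ^ k * (1 - p) ^ (r - k))
      = ∑ k ∈ Finset.range (r + 1), p ^ k * (1 - p) ^ (r - k) * (r.choose k : ℝ) :=
    Finset.sum_congr rfl (fun k _ => by ring)
  rw [h1, ← add_pow]
  norm_num

/-- Binomial quorum monotonicity: with one more trial, the lower-tail probability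
strictly decreases and the upper-tail probability strictly increases. -/
theorem stmt_2 (r q : ℕ) (p : ℝ) (hp0 : 0 < p) (hp1 : p < 1) (hqr : q ≤ r)
    (h : (q : ℝ) < ((r : ℝ) + 1) * p) :
    (∑ k ∈ Finset.range (q + 1), ((r + 1).choose k : ℝ) * p ^ k * (1 - p) ^ (r + 1 - k)
        < ∑ k ∈ Finset.range (q + 1), (r.choose k : ℝ) * p ^ k * (1 - p) ^ (r - k))
    ∧ (∑ k ∈ Finset.Icc (q + 1) r, (r.choose k : ℝ) * p ^ k * (1 - p) ^ (r - k)
        < ∑ k ∈ Finset.Icc (q + 1) (r + 1),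
            ((r + 1).choose k : ℝ) * p ^ k * (1 - p) ^ (r + 1 - k)) := by
  have hpos : 0 < p * (r.choose q : ℝ) * p ^ q * (1 - p) ^ (r - q) := by
    have hc : 0 < (r.choose q : ℝ) := by exact_mod_cast Nat.choose_pos hqr
    have h1p : 0 < 1 - p := by linarith
    positivity
  have key := tail_key p q r hqr
  have first : ∑ k ∈ Finset.range (q + 1), ((r + 1).choose k : ℝ) * p ^ k * (1 - p) ^ (r + 1 - k)
      < ∑ k ∈ Finset.range (q + 1), (r.choose k : ℝ) * p ^ k * (1 - p) ^ (r - k) := by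
    rw [key]; linarith
  refine ⟨first, ?_⟩
  have split : ∀ (n : ℕ) (f : ℕ → ℝ), q + 1 ≤ n + 1 →
      (∑ k ∈ Finset.range (q+1), f k) + ∑ k ∈ Finset.Icc (q+1) n, f k
        = ∑ k ∈ Finset.range (n+1), f k := by
    intro n f hn
    rw [← Finset.Ico_add_one_right_eq_Icc, Finset.range_eq_Ico, Finset.range_eq_Ico]
    exact Finset.sum_Ico_consecutive f (Nat.zero_le _) hn
  have s1 := split r (fun k => (r.choose k : ℝ) * p ^ k * (1 - p) ^ (r - k)) (by omega)
  have s2 := split (r+1) (fun k => ((r+1).choose k : ℝ) * p ^ k * (1 - p) ^ (r + 1 - k)) (by omega)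
  have t1 := total_one p r
  have t2 := total_one p (r+1)
  rw [t1] at s1
  rw [t2] at s2
  linarith
end

section
/- Hypergeometric tail bound: let $X \sim \mathcal{HG}(N, M, r)$ count the number of marked items in a uniformly random $r$-subset drawn without replacement from a population of $N$ items containing $M$ marked items. Then $\mathbb{E}[X] = rM/N$, and for every $t \in (0, M/N)$, $\Pr(X \le \mathbb{E}[X] - rt) \le \exp(-2rt^2)$. -/
open Finset

lemma count_supersets {α : Type*} [DecidableEq α] [Fintype α] (B : Finset α) (r : ℕ)
    (hbr : B.card ≤ r) :
    ((Finset.powersetCard r (Finset.univ : Finset α)).filter (fun A => B ⊆ A)).card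
      = (Fintype.card α - B.card).choose (r - B.card) := by
  rw [← Finset.card_univ_diff B, ← Finset.card_powersetCard (r - B.card) (Finset.univ \ B)]
  apply Finset.card_bij (fun A _ => A \ B)
  · intro A hA
    simp only [Finset.mem_filter, Finset.mem_powersetCard] at hA
    obtain ⟨⟨_, hcard⟩, hBA⟩ := hA
    simp only [Finset.mem_powersetCard]
    exact ⟨Finset.sdiff_subset_sdiff (Finset.subset_univ A) le_rfl,
      by rw [Finset.card_sdiff_of_subset hBA, hcard]⟩
  · intro A hA A' hA' h
    simp only [Finset.mem_filter, Finset.mem_powersetCard] at hA hA'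
    have : A \ B ∪ B = A' \ B ∪ B := by rw [h]
    rwa [Finset.sdiff_union_of_subset hA.2, Finset.sdiff_union_of_subset hA'.2] at this
  · intro C hC
    simp only [Finset.mem_powersetCard] at hC
    refine ⟨C ∪ B, ?_, ?_⟩
    · simp only [Finset.mem_filter, Finset.mem_powersetCard]
      have hdisj : Disjoint C B := Finset.disjoint_of_subset_left hC.1 Finset.sdiff_disjoint
      refine ⟨⟨Finset.subset_univ _, ?_⟩, Finset.subset_union_right⟩
      rw [Finset.card_union_of_disjoint hdisj, hC.2]
      omega
    · rw [Finset.union_sdiff_right, Finset.sdiff_eq_self_of_disjoint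
        (Finset.disjoint_of_subset_left hC.1 Finset.sdiff_disjoint)]

lemma choose_ratio_le {K N : ℕ} (hKN : K ≤ N) (hN : 0 < N) (j : ℕ) :
    (K.choose j : ℝ) ≤ (N.choose j : ℝ) * ((K : ℝ) / N) ^ j := by
  induction j with
  | zero => simp
  | succ j ih =>
    have hNpos : (0 : ℝ) < N := by exact_mod_cast hN
    have hK : (K.choose (j+1) : ℝ) * (j+1) = (K.choose j : ℝ) * ((K - j : ℕ) : ℝ) := by
      exact_mod_cast Nat.choose_succ_right_eq K j
    have hNc : (N.choose (j+1) : ℝ) * (j+1) = (N.choose j : ℝ) * ((N - j : ℕ) : ℝ) := by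
      exact_mod_cast Nat.choose_succ_right_eq N j
    have hnat : N * (K - j) ≤ K * (N - j) := by
      rcases le_total j K with h | h
      · rw [Nat.mul_sub, Nat.mul_sub]
        rw [Nat.mul_comm K N]
        exact Nat.sub_le_sub_left (Nat.mul_le_mul_right j hKN) (N * K)
      · rw [Nat.sub_eq_zero_of_le h, Nat.mul_zero]
        exact Nat.zero_le _
    have hreal : ((K - j : ℕ) : ℝ) ≤ ((N - j : ℕ) : ℝ) * K / N := by
      rw [le_div_iff₀ hNpos]
      calc ((K - j : ℕ) : ℝ) * N = ((N * (K - j) : ℕ) : ℝ) := by push_cast; ring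
        _ ≤ ((K * (N - j) : ℕ) : ℝ) := by exact_mod_cast hnat
        _ = ((N - j : ℕ) : ℝ) * K := by push_cast; ring
    have hj1 : (0:ℝ) < (j:ℝ) + 1 := by positivity
    rw [← mul_le_mul_iff_of_pos_right hj1]
    calc (K.choose (j+1) : ℝ) * ((j:ℝ)+1) = (K.choose j : ℝ) * ((K - j : ℕ) : ℝ) := by
            rw [← hK]
      _ ≤ ((N.choose j : ℝ) * ((K : ℝ) / N) ^ j) * (((N - j : ℕ) : ℝ) * K / N) := by
          apply mul_le_mul ih hreal (Nat.cast_nonneg _)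
          positivity
      _ = ((N.choose j : ℝ) * ((N - j : ℕ) : ℝ)) * (((K : ℝ) / N) ^ (j+1)) := by
          ring
      _ = (N.choose (j+1) : ℝ) * ((K : ℝ) / N) ^ (j+1) * ((j:ℝ)+1) := by
          rw [← hNc]; ring

lemma sum_powerset_zpow {α : Type*} [DecidableEq α] (z : ℝ) (s : Finset α) :
    (1 + z) ^ s.card = ∑ B ∈ s.powerset, z ^ B.card := by
  rw [Finset.sum_powerset]
  have : ∀ j ∈ Finset.range (s.card + 1),
      ∑ B ∈ Finset.powersetCard j s, z ^ B.card = (s.card.choose j : ℝ) * z ^ j := by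
    intro j _
    rw [Finset.sum_congr rfl (fun B hB => by
      rw [(Finset.mem_powersetCard.1 hB).2]), Finset.sum_const, Finset.card_powersetCard,
      nsmul_eq_mul]
  rw [Finset.sum_congr rfl this]
  rw [add_comm (1:ℝ) z, add_pow]
  exact Finset.sum_congr rfl (fun j _ => by ring)

-- MGF bound: ∑_{|A|=r} (1+z)^{|A∩W|} ≤ C(n,r) (1 + q z)^r  with q = |W|/n
lemma mgf_bound {n : ℕ} (hn : 0 < n) (W : Finset (Fin n)) (r : ℕ) (hr : r ≤ n)
    (z : ℝ) (hz : 0 ≤ z) :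
    ∑ A ∈ Finset.powersetCard r (Finset.univ : Finset (Fin n)), (1 + z) ^ (A ∩ W).card
      ≤ (n.choose r : ℝ) * (1 + ((W.card : ℝ) / n) * z) ^ r := by
  classical
  set S := Finset.powersetCard r (Finset.univ : Finset (Fin n)) with hS
  set K := W.card with hKdef
  have hKn : K ≤ n := by
    calc K ≤ (Finset.univ : Finset (Fin n)).card := Finset.card_le_univ W
      _ = n := by simp
  set q : ℝ := (K : ℝ) / n with hq
  have hq0 : 0 ≤ q := by rw [hq]; positivity
  -- per-B counting value as a function of the cardinality only
  set cval : ℕ → ℝ := fun j => if j ≤ r then ((n - j).choose (r - j) : ℝ) else 0 with hcval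
  have hcnt : ∀ B ∈ W.powerset,
      ((S.filter (fun A => B ⊆ A)).card : ℝ) = cval B.card := by
    intro B hB
    rcases le_or_gt B.card r with hjr | hjr
    · rw [hcval]
      simp only [if_pos hjr]
      rw [hS, count_supersets B r hjr, Fintype.card_fin]
    · rw [hcval]
      simp only [if_neg (not_le.2 hjr)]
      norm_cast
      rw [Finset.card_eq_zero]
      apply Finset.filter_false_of_mem
      intro A hA hBA
      have h1 : B.card ≤ A.card := Finset.card_le_card hBA
      rw [(Finset.mem_powersetCard.1 hA).2] at h1
      omega
  -- step 1: expand and swap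
  have step1 : ∑ A ∈ S, (1 + z) ^ (A ∩ W).card
      = ∑ B ∈ W.powerset, z ^ B.card * cval B.card := by
    have hps : ∀ A : Finset (Fin n), (A ∩ W).powerset = W.powerset.filter (fun B => B ⊆ A) := by
      intro A; ext B
      simp only [Finset.mem_powerset, Finset.mem_filter, Finset.subset_inter_iff]
      exact ⟨fun h => ⟨h.2, h.1⟩, fun h => ⟨h.2, h.1⟩⟩
    calc ∑ A ∈ S, (1 + z) ^ (A ∩ W).card
        = ∑ A ∈ S, ∑ B ∈ W.powerset, (if B ⊆ A then z ^ B.card else 0) := by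
          refine Finset.sum_congr rfl (fun A _ => ?_)
          rw [sum_powerset_zpow z (A ∩ W), hps A, Finset.sum_filter]
      _ = ∑ B ∈ W.powerset, ∑ A ∈ S, (if B ⊆ A then z ^ B.card else 0) := Finset.sum_comm
      _ = ∑ B ∈ W.powerset, z ^ B.card * cval B.card := by
          refine Finset.sum_congr rfl (fun B hB => ?_)
          rw [← Finset.sum_filter, Finset.sum_const, nsmul_eq_mul, mul_comm, hcnt B hB]
  -- step 2: group by cardinality
  have step2 : ∑ B ∈ W.powerset, z ^ B.card * cval B.card
      = ∑ j ∈ Finset.range (K + 1), (K.choose j : ℝ) * (z ^ j * cval j) := by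
    rw [Finset.sum_powerset]
    refine Finset.sum_congr rfl (fun j _ => ?_)
    rw [Finset.sum_congr rfl (fun B hB => by
      rw [(Finset.mem_powersetCard.1 hB).2]), Finset.sum_const, Finset.card_powersetCard,
      nsmul_eq_mul]
  -- step 3: termwise bound
  have step3 : ∀ j ∈ Finset.range (K + 1),
      (K.choose j : ℝ) * (z ^ j * cval j)
        ≤ (n.choose r : ℝ) * ((r.choose j : ℝ) * (q * z) ^ j) := by
    intro j _
    rcases le_or_gt j r with hjr | hjr
    · rw [hcval]
      simp only [if_pos hjr]
      have h1 : (K.choose j : ℝ) * ((n - j).choose (r - j) : ℝ)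
          ≤ ((n.choose j : ℝ) * q ^ j) * ((n - j).choose (r - j) : ℝ) :=
        mul_le_mul_of_nonneg_right (choose_ratio_le hKn hn j) (Nat.cast_nonneg _)
      have h2 : (n.choose j : ℝ) * ((n - j).choose (r - j) : ℝ)
          = (n.choose r : ℝ) * (r.choose j : ℝ) := by
        exact_mod_cast (Nat.choose_mul hjr).symm
      calc (K.choose j : ℝ) * (z ^ j * ((n - j).choose (r - j) : ℝ))
          = ((K.choose j : ℝ) * ((n - j).choose (r - j) : ℝ)) * z ^ j := by ring
        _ ≤ (((n.choose j : ℝ) * q ^ j) * ((n - j).choose (r - j) : ℝ)) * z ^ j :=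
            mul_le_mul_of_nonneg_right h1 (by positivity)
        _ = ((n.choose j : ℝ) * ((n - j).choose (r - j) : ℝ)) * (q ^ j * z ^ j) := by ring
        _ = (n.choose r : ℝ) * ((r.choose j : ℝ) * (q * z) ^ j) := by
            rw [h2, mul_pow]; ring
    · rw [hcval]
      simp only [if_neg (not_le.2 hjr), Nat.choose_eq_zero_of_lt hjr]
      simp
  -- step 4: binomial theorem
  have step4 : ∑ j ∈ Finset.range (K + 1), (r.choose j : ℝ) * (q * z) ^ j
      ≤ (1 + q * z) ^ r := by
    have hbin : (1 + q * z) ^ r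
        = ∑ j ∈ Finset.range (r + 1), (r.choose j : ℝ) * (q * z) ^ j := by
      rw [add_comm (1:ℝ) (q*z), add_pow]
      exact Finset.sum_congr rfl (fun j _ => by ring)
    have hnonneg : ∀ j, 0 ≤ (r.choose j : ℝ) * (q * z) ^ j := by
      intro j; positivity
    have hext : ∀ m, r + 1 ≤ m → (∑ j ∈ Finset.range m, (r.choose j : ℝ) * (q * z) ^ j)
        = ∑ j ∈ Finset.range (r + 1), (r.choose j : ℝ) * (q * z) ^ j := by
      intro m hm
      rw [← Finset.sum_subset (Finset.range_subset_range.2 hm)]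
      intro x _ hx
      rw [Finset.mem_range, not_lt] at hx
      rw [Nat.choose_eq_zero_of_lt (by omega)]
      simp
    calc ∑ j ∈ Finset.range (K + 1), (r.choose j : ℝ) * (q * z) ^ j
        ≤ ∑ j ∈ Finset.range (K + r + 1), (r.choose j : ℝ) * (q * z) ^ j := by
          apply Finset.sum_le_sum_of_subset_of_nonneg
            (Finset.range_subset_range.2 (by omega))
          intro j _ _; exact hnonneg j
      _ = ∑ j ∈ Finset.range (r + 1), (r.choose j : ℝ) * (q * z) ^ j := hext _ (by omega)
      _ = (1 + q * z) ^ r := hbin.symm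
  calc ∑ A ∈ S, (1 + z) ^ (A ∩ W).card
      = ∑ j ∈ Finset.range (K + 1), (K.choose j : ℝ) * (z ^ j * cval j) := by
        rw [step1, step2]
    _ ≤ ∑ j ∈ Finset.range (K + 1), (n.choose r : ℝ) * ((r.choose j : ℝ) * (q * z) ^ j) :=
        Finset.sum_le_sum step3
    _ = (n.choose r : ℝ) * ∑ j ∈ Finset.range (K + 1), (r.choose j : ℝ) * (q * z) ^ j := by
        rw [Finset.mul_sum]
    _ ≤ (n.choose r : ℝ) * (1 + q * z) ^ r :=
        mul_le_mul_of_nonneg_left step4 (Nat.cast_nonneg _)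

lemma bernoulli_mgf_le {q lam : ℝ} (hq0 : 0 ≤ q) (hq1 : q ≤ 1) (hlam : 0 ≤ lam) :
    1 - q + q * Real.exp lam ≤ Real.exp (lam * q + lam ^ 2 / 8) := by
  set D : ℝ → ℝ := fun x => 1 - q + q * Real.exp x with hD_def
  have hD : ∀ x, 0 < D x := by
    intro x
    rcases eq_or_lt_of_le hq0 with h | h
    · simp [hD_def, ← h]
    · have h1 : 0 < q * Real.exp x := by positivity
      have h2 : 0 ≤ 1 - q := by linarith
      simp only [hD_def]; linarith
  set g : ℝ → ℝ := fun x => q * Real.exp x / D x with hg_def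
  set f' : ℝ → ℝ := fun x => q + x / 4 - g x with hf'_def
  set f : ℝ → ℝ := fun x => x * q + x ^ 2 / 8 - Real.log (D x) with hf_def
  have hDdiff : ∀ x, HasDerivAt D (q * Real.exp x) x := by
    intro x
    exact ((Real.hasDerivAt_exp x).const_mul q).const_add (1 - q)
  have hder : ∀ x, HasDerivAt f (f' x) x := by
    intro x
    have h1 : HasDerivAt (fun x : ℝ => x * q + x ^ 2 / 8) (q + x / 4) x := by
      have := ((hasDerivAt_id x).mul_const q).add ((hasDerivAt_pow 2 x).div_const 8)
      exact this.congr_deriv (by simp; ring)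
    have hlog : HasDerivAt (fun x => Real.log (D x)) (g x) x := by
      simpa [hg_def] using (hDdiff x).log (hD x).ne'
    exact h1.sub hlog
  have hgder : ∀ x, HasDerivAt g (g x - g x ^ 2) x := by
    intro x
    have hnum : HasDerivAt (fun x : ℝ => q * Real.exp x) (q * Real.exp x) x :=
      (Real.hasDerivAt_exp x).const_mul q
    have := hnum.div (hDdiff x) (hD x).ne'
    refine this.congr_deriv ?_
    have hDx := (hD x).ne'
    simp only [hg_def]
    field_simp
  have hder' : ∀ x, HasDerivAt f' (g x ^ 2 - g x + 1 / 4) x := by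
    intro x
    have h1 : HasDerivAt (fun x : ℝ => q + x / 4) (1 / 4) x := by
      simpa using ((hasDerivAt_id x).div_const 4).const_add q
    have := h1.sub (hgder x)
    refine this.congr_deriv ?_
    ring
  have hf'0 : f' 0 = 0 := by
    simp [hf'_def, hg_def, hD_def, Real.exp_zero]
  have hmono' : Monotone f' :=
    monotone_of_deriv_nonneg (fun x => (hder' x).differentiableAt)
      (fun x => by rw [(hder' x).deriv]; nlinarith [sq_nonneg (g x - 1 / 2)])
  have hmono : MonotoneOn f (Set.Ici 0) := by
    apply monotoneOn_of_deriv_nonneg (convex_Ici 0)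
      (Differentiable.continuous (fun x => (hder x).differentiableAt)).continuousOn
      (fun x _ => (hder x).differentiableAt.differentiableWithinAt)
    intro x hx
    rw [(hder x).deriv]
    have hx0 : (0 : ℝ) ≤ x := le_of_lt (by simpa using hx)
    calc (0:ℝ) = f' 0 := hf'0.symm
      _ ≤ f' x := hmono' hx0
  have hf0 : f 0 = 0 := by
    simp [hf_def, hD_def, Real.exp_zero]
  have hflam : 0 ≤ f lam := by
    calc (0:ℝ) = f 0 := hf0.symm
      _ ≤ f lam := hmono (Set.mem_Ici.2 le_rfl) (Set.mem_Ici.2 hlam) hlam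
  have hlog_le : Real.log (D lam) ≤ lam * q + lam ^ 2 / 8 := by
    have h2 : (0:ℝ) ≤ lam * q + lam ^ 2 / 8 - Real.log (D lam) := hflam
    linarith
  have := (Real.log_le_iff_le_exp (hD lam)).1 hlog_le
  simpa [hD_def] using this

lemma hyper_tail {n : ℕ} (hn : 0 < n) (W : Finset (Fin n)) (r : ℕ) (hr : r ≤ n)
    (s : ℝ) (hs : 0 ≤ s) :
    (((Finset.powersetCard r (Finset.univ : Finset (Fin n))).filter
        (fun A => (r : ℝ) * W.card / n + r * s ≤ ((A ∩ W).card : ℝ))).card : ℝ)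
      ≤ (n.choose r : ℝ) * Real.exp (-2 * r * s ^ 2) := by
  classical
  set S := Finset.powersetCard r (Finset.univ : Finset (Fin n)) with hS
  set q : ℝ := (W.card : ℝ) / n with hq
  have hq0 : 0 ≤ q := by rw [hq]; positivity
  have hq1 : q ≤ 1 := by
    rw [hq, div_le_one (by exact_mod_cast hn)]
    exact_mod_cast (Finset.card_le_univ W).trans (by simp)
  set lam : ℝ := 4 * s with hlamdef
  have hlam : 0 ≤ lam := by positivity
  set z : ℝ := Real.exp lam - 1 with hzdef
  have hz : 0 ≤ z := by
    have := Real.one_le_exp hlam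
    rw [hzdef]; linarith
  set c : ℝ := (r : ℝ) * q + (r : ℝ) * s with hc
  set F := S.filter (fun A => (r : ℝ) * W.card / n + r * s ≤ ((A ∩ W).card : ℝ)) with hF
  -- lower bound each term on the event
  have hterm : ∀ A ∈ F, Real.exp (lam * c) ≤ (1 + z) ^ (A ∩ W).card := by
    intro A hA
    have hcond : c ≤ ((A ∩ W).card : ℝ) := by
      have := (Finset.mem_filter.1 hA).2
      rw [hc, hq]
      calc (r:ℝ) * ((W.card:ℝ)/n) + r * s = (r : ℝ) * W.card / n + r * s := by ring
        _ ≤ ((A ∩ W).card : ℝ) := this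
    have h1 : (1 + z) ^ (A ∩ W).card = Real.exp (lam * ((A ∩ W).card : ℝ)) := by
      rw [hzdef]
      rw [show (1 : ℝ) + (Real.exp lam - 1) = Real.exp lam by ring]
      rw [← Real.exp_nat_mul, mul_comm]
    rw [h1]
    exact Real.exp_le_exp.2 (mul_le_mul_of_nonneg_left hcond hlam)
  have hchain : (F.card : ℝ) * Real.exp (lam * c)
      ≤ (n.choose r : ℝ) * (1 + q * z) ^ r := by
    calc (F.card : ℝ) * Real.exp (lam * c) = ∑ _A ∈ F, Real.exp (lam * c) := by
          rw [Finset.sum_const, nsmul_eq_mul]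
      _ ≤ ∑ A ∈ F, (1 + z) ^ (A ∩ W).card := Finset.sum_le_sum hterm
      _ ≤ ∑ A ∈ S, (1 + z) ^ (A ∩ W).card := by
          apply Finset.sum_le_sum_of_subset_of_nonneg (Finset.filter_subset _ _)
          intro A _ _; positivity
      _ ≤ (n.choose r : ℝ) * (1 + q * z) ^ r := mgf_bound hn W r hr z hz
  have hbern : (1 + q * z) ^ r ≤ Real.exp ((r : ℝ) * (lam * q + lam ^ 2 / 8)) := by
    have h1 : 1 + q * z = 1 - q + q * Real.exp lam := by rw [hzdef]; ring
    have h2 : (0:ℝ) ≤ 1 + q * z := by positivity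
    calc (1 + q * z) ^ r ≤ (Real.exp (lam * q + lam ^ 2 / 8)) ^ r := by
          apply pow_le_pow_left₀ h2
          rw [h1]; exact bernoulli_mgf_le hq0 hq1 hlam
      _ = Real.exp ((r : ℝ) * (lam * q + lam ^ 2 / 8)) := by
          rw [← Real.exp_nat_mul]
  have hexp_pos : 0 < Real.exp (lam * c) := Real.exp_pos _
  rw [← mul_le_mul_iff_of_pos_right hexp_pos]
  calc (F.card : ℝ) * Real.exp (lam * c)
      ≤ (n.choose r : ℝ) * Real.exp ((r : ℝ) * (lam * q + lam ^ 2 / 8)) :=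
        hchain.trans (mul_le_mul_of_nonneg_left hbern (Nat.cast_nonneg _))
    _ = (n.choose r : ℝ) * Real.exp (-2 * r * s ^ 2) * Real.exp (lam * c) := by
        rw [mul_assoc ((n.choose r : ℝ)) (Real.exp (-2 * r * s ^ 2)), ← Real.exp_add]
        congr 1
        rw [hc, hlamdef]
        ring

-- expectation, numerator in ℕ
lemma exp_sum {n : ℕ} (W : Finset (Fin n)) (r : ℕ) (hr : 1 ≤ r) :
    ∑ A ∈ Finset.powersetCard r (Finset.univ : Finset (Fin n)), (A ∩ W).card
      = W.card * (n - 1).choose (r - 1) := by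
  classical
  set S := Finset.powersetCard r (Finset.univ : Finset (Fin n)) with hS
  have h1 : ∀ A : Finset (Fin n), (A ∩ W).card = ∑ x ∈ W, if x ∈ A then 1 else 0 := by
    intro A
    rw [Finset.inter_comm, ← Finset.filter_mem_eq_inter, Finset.card_filter]
  calc ∑ A ∈ S, (A ∩ W).card = ∑ A ∈ S, ∑ x ∈ W, if x ∈ A then 1 else 0 :=
        Finset.sum_congr rfl (fun A _ => h1 A)
    _ = ∑ x ∈ W, ∑ A ∈ S, if x ∈ A then 1 else 0 := Finset.sum_comm
    _ = ∑ x ∈ W, (S.filter (fun A => x ∈ A)).card := by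
        refine Finset.sum_congr rfl (fun x _ => ?_)
        rw [Finset.card_filter]
    _ = ∑ x ∈ W, (n - 1).choose (r - 1) := by
        refine Finset.sum_congr rfl (fun x _ => ?_)
        have h2 : (S.filter (fun A => x ∈ A)) = (S.filter (fun A => ({x} : Finset (Fin n)) ⊆ A)) := by
          apply Finset.filter_congr
          intro A _
          simp [Finset.singleton_subset_iff]
        rw [h2, hS, count_supersets ({x} : Finset (Fin n)) r (by simp; omega)]
        simp [Fintype.card_fin]
    _ = W.card * (n - 1).choose (r - 1) := by rw [Finset.sum_const, smul_eq_mul]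

/-- Hypergeometric expectation and lower tail bound: drawing a uniformly random
`r`-subset from a population of `N` items containing `M` marked ones, the expected
number of marked items in the sample is `r*M/N` and the lower tail is bounded by
`exp (-2*r*t^2)`. -/
theorem stmt_5 (N M r : ℕ) (hM : M ≤ N) (hr : r ≤ N) (hN : 0 < N)
    (Marked : Finset (Fin N)) (hMarked : Marked.card = M)
    (t : ℝ) (ht0 : 0 < t) (ht : t < (M : ℝ) / N) :
    ((∑ A ∈ Finset.powersetCard r (Finset.univ : Finset (Fin N)),
        ((A ∩ Marked).card : ℝ)) / (N.choose r : ℝ) = (r : ℝ) * M / N)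
    ∧ (((Finset.powersetCard r (Finset.univ : Finset (Fin N))).filter
          (fun A => ((A ∩ Marked).card : ℝ) ≤ (r : ℝ) * M / N - r * t)).card : ℝ)
          / (N.choose r : ℝ)
        ≤ Real.exp (-2 * r * t ^ 2) := by
  classical
  have hNR : (0:ℝ) < N := by exact_mod_cast hN
  have hchoose_pos : (0:ℝ) < (N.choose r : ℝ) := by
    exact_mod_cast Nat.choose_pos hr
  constructor
  · -- expectation
    rcases Nat.eq_zero_or_pos r with hr0 | hr1
    · subst hr0
      simp [Finset.powersetCard_zero]
    · rw [div_eq_div_iff hchoose_pos.ne' hNR.ne']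
      have hsum : ∑ A ∈ Finset.powersetCard r (Finset.univ : Finset (Fin N)),
          ((A ∩ Marked).card : ℝ)
          = (M : ℝ) * ((N - 1).choose (r - 1) : ℝ) := by
        rw [← Nat.cast_sum]
        rw [exp_sum Marked r hr1, hMarked]
        push_cast
        ring
      rw [hsum]
      -- N * C(N-1, r-1) = C(N,r) * r
      have hid : N * (N - 1).choose (r - 1) = N.choose r * r := by
        have h1 : N = (N - 1) + 1 := by omega
        have h2 : r = (r - 1) + 1 := by omega
        calc N * (N - 1).choose (r - 1) = ((N-1)+1) * (N - 1).choose (r - 1) := by rw [← h1]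
          _ = ((N-1)+1).choose ((r-1)+1) * ((r-1)+1) := Nat.add_one_mul_choose_eq (N-1) (r-1)
          _ = N.choose r * r := by rw [← h1, ← h2]
      have hidR : (N : ℝ) * ((N - 1).choose (r - 1) : ℝ) = (N.choose r : ℝ) * r := by
        exact_mod_cast hid
      calc (M : ℝ) * ((N - 1).choose (r - 1) : ℝ) * N
          = (M : ℝ) * ((N:ℝ) * ((N - 1).choose (r - 1) : ℝ)) := by ring
        _ = (M : ℝ) * ((N.choose r : ℝ) * r) := by rw [hidR]
        _ = (r : ℝ) * M * (N.choose r : ℝ) := by ring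
  · -- tail bound
    set W : Finset (Fin N) := Finset.univ \ Marked with hW
    have hWcard : W.card = N - M := by
      rw [hW, Finset.card_univ_diff, hMarked, Fintype.card_fin]
    have hfilter_eq :
        (Finset.powersetCard r (Finset.univ : Finset (Fin N))).filter
          (fun A => ((A ∩ Marked).card : ℝ) ≤ (r : ℝ) * M / N - r * t)
        = (Finset.powersetCard r (Finset.univ : Finset (Fin N))).filter
          (fun A => (r : ℝ) * W.card / N + r * t ≤ ((A ∩ W).card : ℝ)) := by
      apply Finset.filter_congr
      intro A hA
      have hAcard : A.card = r := (Finset.mem_powersetCard.1 hA).2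
      have hAW : A ∩ W = A \ Marked := by
        rw [hW]; ext x; simp
      have hsplit : (A ∩ Marked).card + (A ∩ W).card = r := by
        rw [hAW, ← hAcard]
        exact Finset.card_inter_add_card_sdiff A Marked
      have hsplitR : ((A ∩ Marked).card : ℝ) + ((A ∩ W).card : ℝ) = r := by
        exact_mod_cast hsplit
      have hWcardR : (W.card : ℝ) = (N : ℝ) - M := by
        rw [hWcard]
        push_cast [hM]
        ring
      constructor
      · intro h
        rw [hWcardR]
        have : (r : ℝ) * ((N:ℝ) - M) / N = r - r * M / N := by field_simp
        rw [this]
        linarith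
      · intro h
        rw [hWcardR] at h
        have : (r : ℝ) * ((N:ℝ) - M) / N = r - r * M / N := by field_simp
        rw [this] at h
        linarith
    rw [hfilter_eq, div_le_iff₀ hchoose_pos]
    calc (((Finset.powersetCard r (Finset.univ : Finset (Fin N))).filter
          (fun A => (r : ℝ) * W.card / N + r * t ≤ ((A ∩ W).card : ℝ))).card : ℝ)
        ≤ (N.choose r : ℝ) * Real.exp (-2 * r * t ^ 2) := hyper_tail hN W r hr t ht0.le
      _ = Real.exp (-2 * r * t ^ 2) * (N.choose r : ℝ) := by ring
end

section
/- Negative association of sampling without replacement: consider $n$ distinct items from which a uniformly random sample of size $s$ is chosen without replacement, and let $X_i$ ($i = 1, \dots, n$) be the indicator that item $i$ is in the sample. Then the random variables $X_1, \dots, X_n$ are negatively associated, i.e., for all disjoint index sets $I, J \subseteq \{1,\dots,n\}$ and all coordinatewise non-decreasing bounded functions $f, g$, $\mathbb{E}[f(X_i, i \in I) g(X_j, j \in J)] \le \mathbb{E}[f(X_i, i \in I)] \cdot \mathbb{E}[g(X_j, j \in J)]$. -/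
open Finset

namespace NAaux

noncomputable def chi {n : ℕ} (A : Finset (Fin n)) : Fin n → ℝ :=
  fun i => if i ∈ A then 1 else 0

variable {n : ℕ}

lemma chi_insert (k : Fin n) (A : Finset (Fin n)) :
    chi (insert k A) = Function.update (chi A) k 1 := by
  funext i
  by_cases h : i = k
  · subst h; simp [chi, Function.update_apply]
  · simp [chi, Function.update_apply, h, Finset.mem_insert]

/-- Double counting: summing over (k, s-subset of V\k) equals (s+1) times
summing over (s+1)-subsets of V. -/
lemma sum_insert_erase (V : Finset (Fin n)) (s : ℕ) (h : Finset (Fin n) → ℝ) :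
    ∑ k ∈ V, ∑ B ∈ Finset.powersetCard s (V.erase k), h (insert k B)
      = (s + 1 : ℝ) * ∑ A ∈ Finset.powersetCard (s + 1) V, h A := by
  have step1 : ∀ k ∈ V,
      ∑ B ∈ Finset.powersetCard s (V.erase k), h (insert k B)
        = ∑ A ∈ (Finset.powersetCard (s + 1) V).filter (fun A => k ∈ A), h A := by
    intro k hk
    refine Finset.sum_bij' (fun B _ => insert k B) (fun A _ => A.erase k) ?_ ?_ ?_ ?_ ?_
    · intro B hB
      rw [Finset.mem_powersetCard] at hB
      have hkB : k ∉ B := fun hmem => (Finset.mem_erase.mp (hB.1 hmem)).1 rfl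
      rw [Finset.mem_filter, Finset.mem_powersetCard]
      refine ⟨⟨?_, ?_⟩, Finset.mem_insert_self k B⟩
      · exact Finset.insert_subset hk (hB.1.trans (Finset.erase_subset _ _))
      · rw [Finset.card_insert_of_notMem hkB, hB.2]
    · intro A hA
      rw [Finset.mem_filter, Finset.mem_powersetCard] at hA
      rw [Finset.mem_powersetCard]
      refine ⟨Finset.erase_subset_erase k hA.1.1, ?_⟩
      rw [Finset.card_erase_of_mem hA.2, hA.1.2]; rfl
    · intro B hB
      rw [Finset.mem_powersetCard] at hB
      have hkB : k ∉ B := fun hmem => (Finset.mem_erase.mp (hB.1 hmem)).1 rfl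
      exact Finset.erase_insert hkB
    · intro A hA
      rw [Finset.mem_filter] at hA
      exact Finset.insert_erase hA.2
    · intro B hB; rfl
  calc ∑ k ∈ V, ∑ B ∈ Finset.powersetCard s (V.erase k), h (insert k B)
      = ∑ k ∈ V, ∑ A ∈ (Finset.powersetCard (s + 1) V).filter (fun A => k ∈ A), h A :=
        Finset.sum_congr rfl step1
    _ = ∑ k ∈ V, ∑ A ∈ Finset.powersetCard (s + 1) V, if k ∈ A then h A else 0 := by
        refine Finset.sum_congr rfl fun k _ => ?_
        rw [Finset.sum_filter]
    _ = ∑ A ∈ Finset.powersetCard (s + 1) V, ∑ k ∈ V, if k ∈ A then h A else 0 :=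
        Finset.sum_comm
    _ = ∑ A ∈ Finset.powersetCard (s + 1) V, ∑ k ∈ V.filter (fun k => k ∈ A), h A := by
        refine Finset.sum_congr rfl fun A _ => ?_
        rw [Finset.sum_filter]
    _ = (s + 1 : ℝ) * ∑ A ∈ Finset.powersetCard (s + 1) V, h A := by
        rw [Finset.mul_sum]
        refine Finset.sum_congr rfl fun A hA => ?_
        rw [Finset.mem_powersetCard] at hA
        rw [Finset.filter_mem_eq_inter, Finset.inter_eq_right.mpr hA.1,
          Finset.sum_const, hA.2, nsmul_eq_mul]
        push_cast
        ring

lemma map_swap_erase (V : Finset (Fin n)) (k k' : Fin n) (hk : k ∈ V) (hk' : k' ∈ V) :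
    (V.erase k).map (Equiv.swap k k').toEmbedding = V.erase k' := by
  have hV : V.map (Equiv.swap k k').toEmbedding = V := by
    ext x
    rw [Finset.mem_map_equiv, Equiv.symm_swap]
    rcases eq_or_ne x k with rfl | hxk
    · rw [Equiv.swap_apply_left]; simp [hk, hk']
    · rcases eq_or_ne x k' with rfl | hxk'
      · rw [Equiv.swap_apply_right]; simp [hk, hk']
      · rw [Equiv.swap_apply_of_ne_of_ne hxk hxk']
  rw [Finset.map_erase]
  simp [hV, Equiv.swap_apply_left]

lemma sum_powersetCard_swap (V : Finset (Fin n)) (s : ℕ) (h : Finset (Fin n) → ℝ)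
    (k k' : Fin n) (hk : k ∈ V) (hk' : k' ∈ V) :
    ∑ A ∈ Finset.powersetCard s (V.erase k), h (A.map (Equiv.swap k k').toEmbedding)
      = ∑ A ∈ Finset.powersetCard s (V.erase k'), h A := by
  conv_rhs => rw [← map_swap_erase V k k' hk hk']
  rw [Finset.powersetCard_map, Finset.sum_map]
  exact Finset.sum_congr rfl fun A _ =>
    congrArg h Finset.mapEmbedding_apply.symm

lemma chi_map_swap_eq_on (I : Finset (Fin n)) (A : Finset (Fin n)) (k k' : Fin n)
    (hkI : k ∉ I) (hk'I : k' ∉ I) (i : Fin n) (hi : i ∈ I) :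
    chi (A.map (Equiv.swap k k').toEmbedding) i = chi A i := by
  have hik : i ≠ k := fun h => hkI (h ▸ hi)
  have hik' : i ≠ k' := fun h => hk'I (h ▸ hi)
  unfold chi
  simp only [Finset.mem_map_equiv, Equiv.symm_swap, Equiv.swap_apply_of_ne_of_ne hik hik']

/-- Conditional sum of `f` given the inserted element is the same for all
inserted elements outside `I`. -/
lemma const_sum (V I : Finset (Fin n)) (s : ℕ) (f : (Fin n → ℝ) → ℝ)
    (hfI : ∀ x y : Fin n → ℝ, (∀ i ∈ I, x i = y i) → f x = f y)
    (k k' : Fin n) (hk : k ∈ V) (hk' : k' ∈ V) (hkI : k ∉ I) (hk'I : k' ∉ I) :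
    ∑ A ∈ Finset.powersetCard s (V.erase k), f (chi (insert k A))
      = ∑ A ∈ Finset.powersetCard s (V.erase k'), f (chi (insert k' A)) := by
  have e : ∀ (j : Fin n), j ∉ I → ∀ A : Finset (Fin n), f (chi (insert j A)) = f (chi A) := by
    intro j hj A
    refine hfI _ _ fun i hi => ?_
    have hij : i ≠ j := fun h => hj (h ▸ hi)
    simp [chi, Finset.mem_insert, hij]
  calc ∑ A ∈ Finset.powersetCard s (V.erase k), f (chi (insert k A))
      = ∑ A ∈ Finset.powersetCard s (V.erase k), f (chi A) :=
        Finset.sum_congr rfl fun A _ => e k hkI A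
    _ = ∑ A ∈ Finset.powersetCard s (V.erase k'), f (chi A) := by
        rw [← sum_powersetCard_swap V s (fun A => f (chi A)) k k' hk hk']
        exact Finset.sum_congr rfl fun A _ =>
          hfI _ _ fun i hi => (chi_map_swap_eq_on I A k k' hkI hk'I i hi).symm
    _ = ∑ A ∈ Finset.powersetCard s (V.erase k'), f (chi (insert k' A)) :=
        (Finset.sum_congr rfl fun A _ => (e k' hk'I A).symm)

/-- Conditional sum of `f` given the inserted element is `k ∈ I` dominates the
one given an inserted element outside `I`. -/
lemma dom_sum (V I : Finset (Fin n)) (s : ℕ) (f : (Fin n → ℝ) → ℝ) (hf : Monotone f)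
    (hfI : ∀ x y : Fin n → ℝ, (∀ i ∈ I, x i = y i) → f x = f y)
    (k k₀ : Fin n) (hk : k ∈ V) (hk₀ : k₀ ∈ V) (hkI : k ∈ I) (hk₀I : k₀ ∉ I) :
    ∑ A ∈ Finset.powersetCard s (V.erase k₀), f (chi (insert k₀ A))
      ≤ ∑ A ∈ Finset.powersetCard s (V.erase k), f (chi (insert k A)) := by
  have hkk : k₀ ≠ k := fun h => hk₀I (h ▸ hkI)
  have hrhs : ∑ A ∈ Finset.powersetCard s (V.erase k), f (chi (insert k A))
      = ∑ A ∈ Finset.powersetCard s (V.erase k₀),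
          f (chi (insert k (A.map (Equiv.swap k₀ k).toEmbedding))) := by
    rw [sum_powersetCard_swap V s (fun B => f (chi (insert k B))) k₀ k hk₀ hk]
  rw [hrhs]
  refine Finset.sum_le_sum fun A hA => ?_
  rw [Finset.mem_powersetCard] at hA
  set B := A.map (Equiv.swap k₀ k).toEmbedding with hB
  have e1 : f (chi (insert k₀ A)) = f (chi (A ∩ I)) := by
    refine hfI _ _ fun i hi => ?_
    have hik₀ : i ≠ k₀ := fun h => hk₀I (h ▸ hi)
    simp [chi, Finset.mem_insert, Finset.mem_inter, hik₀, hi]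
  have e2 : f (chi (insert k B)) = f (chi ((insert k B) ∩ I)) := by
    refine hfI _ _ fun i hi => ?_
    simp [chi, Finset.mem_inter, hi]
  rw [e1, e2]
  refine hf fun i => ?_
  have himp : i ∈ A ∩ I → i ∈ (insert k B) ∩ I := by
    intro hiAI
    rw [Finset.mem_inter] at hiAI
    have hiA : i ∈ A := hiAI.1
    have hiI : i ∈ I := hiAI.2
    rw [Finset.mem_inter]
    refine ⟨?_, hiI⟩
    rcases eq_or_ne i k with rfl | hik
    · exact Finset.mem_insert_self _ _
    · have hik₀ : i ≠ k₀ := fun h => (Finset.mem_erase.mp (hA.1 (h ▸ hiA))).1 rfl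
      refine Finset.mem_insert_of_mem ?_
      rw [hB, Finset.mem_map_equiv, Equiv.symm_swap,
        Equiv.swap_apply_of_ne_of_ne hik₀ hik]
      exact hiA
  unfold chi
  split_ifs with h1 h2
  · exact le_refl 1
  · exact absurd (himp h1) h2
  · norm_num
  · exact le_refl 0

/-- The two-value Chebyshev-type inequality. -/
lemma cheb (V I J : Finset (Fin n)) (hIV : I ⊆ V) (hJV : J ⊆ V) (hIJ : Disjoint I J)
    (U W : Fin n → ℝ) (u0 v0 : ℝ)
    (hU0 : ∀ k ∈ V, k ∉ I → U k = u0) (hW0 : ∀ k ∈ V, k ∉ J → W k = v0)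
    (hU : ∀ k ∈ I, u0 ≤ U k) (hW : ∀ k ∈ J, v0 ≤ W k) :
    (V.card : ℝ) * ∑ k ∈ V, U k * W k ≤ (∑ k ∈ V, U k) * (∑ k ∈ V, W k) := by
  have hIJV : I ∪ J ⊆ V := Finset.union_subset hIV hJV
  have hsplit : ∀ F : Fin n → ℝ,
      ∑ k ∈ V, F k = ∑ k ∈ V \ (I ∪ J), F k + (∑ k ∈ I, F k + ∑ k ∈ J, F k) := by
    intro F
    rw [← Finset.sum_sdiff hIJV, Finset.sum_union hIJ]
  set SU := ∑ k ∈ I, U k with hSU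
  set SW := ∑ k ∈ J, W k with hSW
  have hWI : ∀ k ∈ I, W k = v0 := fun k hk =>
    hW0 k (hIV hk) (Finset.disjoint_left.mp hIJ hk)
  have hUJ : ∀ k ∈ J, U k = u0 := fun k hk =>
    hU0 k (hJV hk) (Finset.disjoint_right.mp hIJ hk)
  have hU0' : ∀ k ∈ V \ (I ∪ J), U k = u0 := by
    intro k hk
    rw [Finset.mem_sdiff, Finset.mem_union] at hk
    exact hU0 k hk.1 fun h => hk.2 (Or.inl h)
  have hW0' : ∀ k ∈ V \ (I ∪ J), W k = v0 := by
    intro k hk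
    rw [Finset.mem_sdiff, Finset.mem_union] at hk
    exact hW0 k hk.1 fun h => hk.2 (Or.inr h)
  set c0 : ℝ := ((V \ (I ∪ J)).card : ℝ) with hc0
  set cI : ℝ := (I.card : ℝ) with hcI
  set cJ : ℝ := (J.card : ℝ) with hcJ
  have hcard : (V.card : ℝ) = c0 + cI + cJ := by
    rw [hc0, hcI, hcJ]
    have : V.card = (V \ (I ∪ J)).card + (I.card + J.card) := by
      rw [← Finset.card_union_of_disjoint hIJ]
      rw [← Finset.card_sdiff_add_card_eq_card hIJV]
    rw [this]; push_cast; ring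
  have eU : ∑ k ∈ V, U k = c0 * u0 + (SU + cJ * u0) := by
    rw [hsplit U, Finset.sum_congr rfl hU0', Finset.sum_congr rfl hUJ,
      Finset.sum_const, Finset.sum_const, nsmul_eq_mul, nsmul_eq_mul]
  have eW : ∑ k ∈ V, W k = c0 * v0 + (cI * v0 + SW) := by
    rw [hsplit W, Finset.sum_congr rfl hW0']
    rw [show ∑ k ∈ I, W k = ∑ k ∈ I, v0 from Finset.sum_congr rfl hWI]
    rw [Finset.sum_const, Finset.sum_const, nsmul_eq_mul, nsmul_eq_mul]
  have eUW : ∑ k ∈ V, U k * W k = c0 * (u0 * v0) + (SU * v0 + u0 * SW) := by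
    rw [hsplit (fun k => U k * W k)]
    have e1 : ∑ k ∈ V \ (I ∪ J), U k * W k = ∑ k ∈ V \ (I ∪ J), u0 * v0 :=
      Finset.sum_congr rfl fun k hk => by rw [hU0' k hk, hW0' k hk]
    have e2 : ∑ k ∈ I, U k * W k = SU * v0 := by
      rw [hSU, Finset.sum_mul]
      exact Finset.sum_congr rfl fun k hk => by rw [hWI k hk]
    have e3 : ∑ k ∈ J, U k * W k = u0 * SW := by
      rw [hSW, Finset.mul_sum]
      exact Finset.sum_congr rfl fun k hk => by rw [hUJ k hk]
    rw [e1, e2, e3, Finset.sum_const, nsmul_eq_mul]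
  have ha : cI * u0 ≤ SU := by
    rw [hSU, hcI]
    calc cI * u0 = ∑ _k ∈ I, u0 := by rw [Finset.sum_const, nsmul_eq_mul]
    _ ≤ ∑ k ∈ I, U k := Finset.sum_le_sum hU
  have hb : cJ * v0 ≤ SW := by
    rw [hSW, hcJ]
    calc cJ * v0 = ∑ _k ∈ J, v0 := by rw [Finset.sum_const, nsmul_eq_mul]
    _ ≤ ∑ k ∈ J, W k := Finset.sum_le_sum hW
  rw [eU, eW, eUW, hcard]
  nlinarith [mul_nonneg (sub_nonneg.mpr ha) (sub_nonneg.mpr hb)]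


lemma key (s : ℕ) : ∀ (V I J : Finset (Fin n)) (f g : (Fin n → ℝ) → ℝ),
    s ≤ V.card → I ⊆ V → J ⊆ V → Disjoint I J → Monotone f → Monotone g →
    (∀ x y : Fin n → ℝ, (∀ i ∈ I, x i = y i) → f x = f y) →
    (∀ x y : Fin n → ℝ, (∀ j ∈ J, x j = y j) → g x = g y) →
    (V.card.choose s : ℝ) * ∑ A ∈ Finset.powersetCard s V, f (chi A) * g (chi A)
      ≤ (∑ A ∈ Finset.powersetCard s V, f (chi A))
        * (∑ A ∈ Finset.powersetCard s V, g (chi A)) := by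
  induction s with
  | zero =>
    intro V I J f g _ _ _ _ _ _ _ _
    simp [Finset.powersetCard_zero]
  | succ s ih =>
    intro V I J f g hsV hIV hJV hIJ hf hg hfI hgJ
    -- trivial cases: one of the functions is constant
    by_cases hI : I = ∅
    · subst hI
      have hconst : ∀ A : Finset (Fin n), f (chi A) = f (chi ∅) := fun A =>
        hfI _ _ (by simp)
      have h1 : ∑ A ∈ Finset.powersetCard (s+1) V, f (chi A) * g (chi A)
          = f (chi ∅) * ∑ A ∈ Finset.powersetCard (s+1) V, g (chi A) := by
        rw [Finset.mul_sum]
        exact Finset.sum_congr rfl fun A _ => by rw [hconst A]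
      have h2 : ∑ A ∈ Finset.powersetCard (s+1) V, f (chi A)
          = (V.card.choose (s+1) : ℝ) * f (chi ∅) := by
        rw [Finset.sum_congr rfl fun A _ => hconst A, Finset.sum_const,
          Finset.card_powersetCard, nsmul_eq_mul]
      rw [h1, h2]; ring_nf; exact le_refl _
    by_cases hJ : J = ∅
    · subst hJ
      have hconst : ∀ A : Finset (Fin n), g (chi A) = g (chi ∅) := fun A =>
        hgJ _ _ (by simp)
      have h1 : ∑ A ∈ Finset.powersetCard (s+1) V, f (chi A) * g (chi A)
          = (∑ A ∈ Finset.powersetCard (s+1) V, f (chi A)) * g (chi ∅) := by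
        rw [Finset.sum_mul]
        exact Finset.sum_congr rfl fun A _ => by rw [hconst A]
      have h2 : ∑ A ∈ Finset.powersetCard (s+1) V, g (chi A)
          = (V.card.choose (s+1) : ℝ) * g (chi ∅) := by
        rw [Finset.sum_congr rfl fun A _ => hconst A, Finset.sum_const,
          Finset.card_powersetCard, nsmul_eq_mul]
      rw [h1, h2]; ring_nf; exact le_refl _
    obtain ⟨k₁, hk₁I⟩ := Finset.nonempty_iff_ne_empty.mpr hI
    obtain ⟨k₀, hk₀J⟩ := Finset.nonempty_iff_ne_empty.mpr hJ
    have hk₁V : k₁ ∈ V := hIV hk₁I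
    have hk₀V : k₀ ∈ V := hJV hk₀J
    have hk₀I : k₀ ∉ I := Finset.disjoint_right.mp hIJ hk₀J
    have hk₁J : k₁ ∉ J := Finset.disjoint_left.mp hIJ hk₁I
    set U : Fin n → ℝ :=
      fun k => ∑ A ∈ Finset.powersetCard s (V.erase k), f (chi (insert k A)) with hU
    set W : Fin n → ℝ :=
      fun k => ∑ A ∈ Finset.powersetCard s (V.erase k), g (chi (insert k A)) with hW
    have hm1 : 1 ≤ V.card := le_trans (Nat.succ_le_succ (Nat.zero_le s)) hsV
    -- the induction hypothesis, conditioned on the inserted element k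
    have hcond : ∀ k ∈ V,
        ((V.card - 1).choose s : ℝ) *
          ∑ A ∈ Finset.powersetCard s (V.erase k),
            f (chi (insert k A)) * g (chi (insert k A)) ≤ U k * W k := by
      intro k hk
      have hfk : Monotone (fun x : Fin n → ℝ => f (Function.update x k 1)) := by
        intro x y hxy
        refine hf fun i => ?_
        by_cases hik : i = k
        · subst hik; simp [Function.update_apply]
        · simp only [Function.update_apply, if_neg hik]; exact hxy i
      have hgk : Monotone (fun x : Fin n → ℝ => g (Function.update x k 1)) := by
        intro x y hxy
        refine hg fun i => ?_
        by_cases hik : i = k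
        · subst hik; simp [Function.update_apply]
        · simp only [Function.update_apply, if_neg hik]; exact hxy i
      have hfkI : ∀ x y : Fin n → ℝ, (∀ i ∈ I.erase k, x i = y i) →
          f (Function.update x k 1) = f (Function.update y k 1) := by
        intro x y hxy
        refine hfI _ _ fun i hi => ?_
        by_cases hik : i = k
        · subst hik; simp [Function.update_apply]
        · simp only [Function.update_apply, if_neg hik]
          exact hxy i (Finset.mem_erase.mpr ⟨hik, hi⟩)
      have hgkJ : ∀ x y : Fin n → ℝ, (∀ j ∈ J.erase k, x j = y j) →
          g (Function.update x k 1) = g (Function.update y k 1) := by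
        intro x y hxy
        refine hgJ _ _ fun i hi => ?_
        by_cases hik : i = k
        · subst hik; simp [Function.update_apply]
        · simp only [Function.update_apply, if_neg hik]
          exact hxy i (Finset.mem_erase.mpr ⟨hik, hi⟩)
      have hsV' : s ≤ (V.erase k).card := by
        rw [Finset.card_erase_of_mem hk]
        exact Nat.le_sub_one_of_lt hsV
      have := ih (V.erase k) (I.erase k) (J.erase k)
        (fun x => f (Function.update x k 1)) (fun x => g (Function.update x k 1))
        hsV' (Finset.erase_subset_erase k hIV) (Finset.erase_subset_erase k hJV)
        (hIJ.mono (Finset.erase_subset k I) (Finset.erase_subset k J))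
        hfk hgk hfkI hgkJ
      rw [Finset.card_erase_of_mem hk] at this
      simpa only [← chi_insert] using this
    -- sums of conditional expectations
    have hUsum : ∑ k ∈ V, U k
        = (s + 1 : ℝ) * ∑ A ∈ Finset.powersetCard (s+1) V, f (chi A) :=
      sum_insert_erase V s (fun A => f (chi A))
    have hWsum : ∑ k ∈ V, W k
        = (s + 1 : ℝ) * ∑ A ∈ Finset.powersetCard (s+1) V, g (chi A) :=
      sum_insert_erase V s (fun A => g (chi A))
    have hFGsum : ((V.card - 1).choose s : ℝ) *
        ((s + 1 : ℝ) * ∑ A ∈ Finset.powersetCard (s+1) V, f (chi A) * g (chi A))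
        ≤ ∑ k ∈ V, U k * W k := by
      rw [← sum_insert_erase V s (fun A => f (chi A) * g (chi A)), Finset.mul_sum]
      exact Finset.sum_le_sum hcond
    -- constancy and domination
    have hU0 : ∀ k ∈ V, k ∉ I → U k = U k₀ := fun k hk hkI =>
      const_sum V I s f hfI k k₀ hk hk₀V hkI hk₀I
    have hW0 : ∀ k ∈ V, k ∉ J → W k = W k₁ := fun k hk hkJ =>
      const_sum V J s g hgJ k k₁ hk hk₁V hkJ hk₁J
    have hUge : ∀ k ∈ I, U k₀ ≤ U k := fun k hk =>
      dom_sum V I s f hf hfI k k₀ (hIV hk) hk₀V hk hk₀I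
    have hWge : ∀ k ∈ J, W k₁ ≤ W k := fun k hk =>
      dom_sum V J s g hg hgJ k k₁ (hJV hk) hk₁V hk hk₁J
    have hcheb : (V.card : ℝ) * ∑ k ∈ V, U k * W k
        ≤ (∑ k ∈ V, U k) * (∑ k ∈ V, W k) :=
      cheb V I J hIV hJV hIJ U W (U k₀) (W k₁) hU0 hW0 hUge hWge
    -- combine
    set SF := ∑ A ∈ Finset.powersetCard (s+1) V, f (chi A) with hSF
    set SG := ∑ A ∈ Finset.powersetCard (s+1) V, g (chi A) with hSG
    set SFG := ∑ A ∈ Finset.powersetCard (s+1) V, f (chi A) * g (chi A) with hSFG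
    have hchoose : (V.card : ℝ) * ((V.card - 1).choose s : ℝ)
        = (V.card.choose (s+1) : ℝ) * (s + 1 : ℝ) := by
      have := Nat.add_one_mul_choose_eq (V.card - 1) s
      rw [Nat.sub_add_cancel hm1] at this
      exact_mod_cast this
    have hm0 : (0 : ℝ) ≤ (V.card : ℝ) := Nat.cast_nonneg _
    have B1 : (V.card : ℝ) * (((V.card - 1).choose s : ℝ) * ((s + 1 : ℝ) * SFG))
        ≤ (V.card : ℝ) * ∑ k ∈ V, U k * W k := mul_le_mul_of_nonneg_left hFGsum hm0
    have B2 : (V.card : ℝ) * ∑ k ∈ V, U k * W k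
        ≤ ((s + 1 : ℝ) * SF) * ((s + 1 : ℝ) * SG) := by
      rw [← hUsum, ← hWsum]; exact hcheb
    have B3 : (s + 1 : ℝ) * (s + 1 : ℝ) * ((V.card.choose (s+1) : ℝ) * SFG)
        ≤ (s + 1 : ℝ) * (s + 1 : ℝ) * (SF * SG) := by
      have e : (s + 1 : ℝ) * (s + 1 : ℝ) * ((V.card.choose (s+1) : ℝ) * SFG)
          = (V.card : ℝ) * (((V.card - 1).choose s : ℝ) * ((s + 1 : ℝ) * SFG)) := by
        linear_combination ((s + 1 : ℝ) * SFG) * hchoose.symm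
      rw [e]
      calc (V.card : ℝ) * (((V.card - 1).choose s : ℝ) * ((s + 1 : ℝ) * SFG))
          ≤ ((s + 1 : ℝ) * SF) * ((s + 1 : ℝ) * SG) := B1.trans B2
        _ = (s + 1 : ℝ) * (s + 1 : ℝ) * (SF * SG) := by ring
    have hpos : (0 : ℝ) < (s + 1 : ℝ) * (s + 1 : ℝ) := by positivity
    exact (mul_le_mul_iff_right₀ hpos).mp B3

end NAaux

/-- Negative association of sampling without replacement: for the indicator
variables of a uniformly random `s`-subset of `{1,…,n}`, and any coordinatewise
non-decreasing functions `f`, `g` depending on disjoint coordinate sets,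
`E[f·g] ≤ E[f]·E[g]` (expectations written as averages over all `s`-subsets). -/
theorem stmt_6 (n s : ℕ) (hs : s ≤ n)
    (I J : Finset (Fin n)) (hIJ : Disjoint I J)
    (f g : (Fin n → ℝ) → ℝ) (hf : Monotone f) (hg : Monotone g)
    (hfI : ∀ x y : Fin n → ℝ, (∀ i ∈ I, x i = y i) → f x = f y)
    (hgJ : ∀ x y : Fin n → ℝ, (∀ j ∈ J, x j = y j) → g x = g y) :
    (∑ A ∈ Finset.powersetCard s (Finset.univ : Finset (Fin n)),
        f (fun i => if i ∈ A then (1 : ℝ) else 0) *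
          g (fun i => if i ∈ A then (1 : ℝ) else 0)) / (n.choose s : ℝ)
      ≤ ((∑ A ∈ Finset.powersetCard s (Finset.univ : Finset (Fin n)),
            f (fun i => if i ∈ A then (1 : ℝ) else 0)) / (n.choose s : ℝ))
        * ((∑ A ∈ Finset.powersetCard s (Finset.univ : Finset (Fin n)),
            g (fun i => if i ∈ A then (1 : ℝ) else 0)) / (n.choose s : ℝ)) := by
  have hcard : (Finset.univ : Finset (Fin n)).card = n := by simp
  have hk := NAaux.key s (Finset.univ : Finset (Fin n)) I J f g
    (by rw [hcard]; exact hs) (Finset.subset_univ I) (Finset.subset_univ J)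
    hIJ hf hg hfI hgJ
  rw [hcard] at hk
  have hC : (0 : ℝ) < (n.choose s : ℝ) := by
    exact_mod_cast Nat.choose_pos hs
  have hchi : (NAaux.chi : Finset (Fin n) → Fin n → ℝ)
      = fun A => (fun i => if i ∈ A then (1 : ℝ) else 0) := rfl
  rw [hchi] at hk
  rw [div_mul_div_comm, div_le_div_iff₀ hC (by positivity)]
  calc (∑ A ∈ Finset.powersetCard s (Finset.univ : Finset (Fin n)),
        f (fun i => if i ∈ A then (1 : ℝ) else 0) *
          g (fun i => if i ∈ A then (1 : ℝ) else 0)) * ((n.choose s : ℝ) * (n.choose s : ℝ))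
      = ((n.choose s : ℝ) * ∑ A ∈ Finset.powersetCard s (Finset.univ : Finset (Fin n)),
        f (fun i => if i ∈ A then (1 : ℝ) else 0) *
          g (fun i => if i ∈ A then (1 : ℝ) else 0)) * (n.choose s : ℝ) := by ring
    _ ≤ ((∑ A ∈ Finset.powersetCard s (Finset.univ : Finset (Fin n)),
            f (fun i => if i ∈ A then (1 : ℝ) else 0))
        * (∑ A ∈ Finset.powersetCard s (Finset.univ : Finset (Fin n)),
            g (fun i => if i ∈ A then (1 : ℝ) else 0))) * (n.choose s : ℝ) :=
        mul_le_mul_of_nonneg_right hk hC.le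
end

section
/- Quorum formation bound: suppose each of $n - f$ correct replicas (out of $n$ total) independently selects a uniformly random sample of $s = o \cdot q$ distinct replicas from the population of $n$ and sends a message to each member of its sample. If $n < o(n-f)$, then for any fixed replica $j$, the probability that at least $q$ correct replicas include $j$ in their samples is at least $1 - \exp(-q(c-1)^2/(2c))$, where $c = o(n-f)/n$. -/
open MeasureTheory ProbabilityTheory
open scoped ProbabilityTheory

noncomputable instance {α : Type*} : MeasurableSpace (Finset α) := ⊤


open Finset in
/-- Elementary Chernoff bound for the binomial lower tail, expressed as a sum over subsets. -/
lemma chernoff_tail_aux {ι : Type*} [DecidableEq ι] (F : Finset ι) (q : ℕ) (pr c : ℝ)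
    (hc : 1 < c) (hpr0 : 0 ≤ pr) (hpr1 : pr ≤ 1)
    (hmp : (F.card : ℝ) * pr = c * q) :
    ∑ T ∈ F.powerset.filter (fun T => T.card < q), pr ^ T.card * (1 - pr) ^ (F.card - T.card)
      ≤ Real.exp (-((q : ℝ) * (c - 1) ^ 2 / (2 * c))) := by
  have hc0 : (0 : ℝ) < c := by linarith
  have h1p : (0 : ℝ) ≤ 1 - pr := by linarith
  have hprc : (0 : ℝ) ≤ pr / c := div_nonneg hpr0 hc0.le
  have hterm : ∀ a b : ℕ, (0:ℝ) ≤ (pr / c) ^ a * (1 - pr) ^ b :=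
    fun a b => mul_nonneg (pow_nonneg hprc a) (pow_nonneg h1p b)
  have hx0 : 0 ≤ pr / c + (1 - pr) := by linarith
  have key : ∀ T ∈ F.powerset.filter (fun T => T.card < q),
      pr ^ T.card * (1 - pr) ^ (F.card - T.card)
        ≤ c ^ q * ((pr / c) ^ T.card * (1 - pr) ^ (F.card - T.card)) := by
    intro T hT
    rw [mem_filter] at hT
    have h1 : pr ^ T.card = c ^ T.card * (pr / c) ^ T.card := by
      rw [← mul_pow, mul_div_cancel₀ _ (ne_of_gt hc0)]
    have h2 : (c : ℝ) ^ T.card ≤ c ^ q := pow_le_pow_right₀ (le_of_lt hc) (le_of_lt hT.2)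
    calc pr ^ T.card * (1 - pr) ^ (F.card - T.card)
        = c ^ T.card * ((pr / c) ^ T.card * (1 - pr) ^ (F.card - T.card)) := by
          rw [h1]; ring
      _ ≤ c ^ q * ((pr / c) ^ T.card * (1 - pr) ^ (F.card - T.card)) := by
          exact mul_le_mul_of_nonneg_right h2 (hterm _ _)
  have step1 : ∑ T ∈ F.powerset.filter (fun T => T.card < q),
      pr ^ T.card * (1 - pr) ^ (F.card - T.card)
      ≤ c ^ q * ∑ T ∈ F.powerset, (pr / c) ^ T.card * (1 - pr) ^ (F.card - T.card) := by
    calc ∑ T ∈ F.powerset.filter (fun T => T.card < q),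
        pr ^ T.card * (1 - pr) ^ (F.card - T.card)
        ≤ ∑ T ∈ F.powerset.filter (fun T => T.card < q),
            c ^ q * ((pr / c) ^ T.card * (1 - pr) ^ (F.card - T.card)) := sum_le_sum key
      _ ≤ ∑ T ∈ F.powerset, c ^ q * ((pr / c) ^ T.card * (1 - pr) ^ (F.card - T.card)) := by
          apply sum_le_sum_of_subset_of_nonneg (filter_subset _ _)
          intro T _ _; exact mul_nonneg (pow_nonneg hc0.le q) (hterm _ _)
      _ = c ^ q * ∑ T ∈ F.powerset, (pr / c) ^ T.card * (1 - pr) ^ (F.card - T.card) := by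
          rw [mul_sum]
  have step2 : ∑ T ∈ F.powerset, (pr / c) ^ T.card * (1 - pr) ^ (F.card - T.card)
      = (pr / c + (1 - pr)) ^ F.card := by
    have h := Finset.prod_add (fun _ : ι => pr / c) (fun _ : ι => 1 - pr) F
    rw [Finset.prod_const] at h
    rw [h]
    apply Finset.sum_congr rfl
    intro T hT
    rw [Finset.prod_const, Finset.prod_const, Finset.card_sdiff_of_subset (Finset.mem_powerset.mp hT)]
  have step3 : (pr / c + (1 - pr)) ^ F.card ≤ Real.exp ((F.card : ℝ) * (pr * (1 / c - 1))) := by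
    have hb : pr / c + (1 - pr) ≤ Real.exp (pr * (1 / c - 1)) := by
      have := Real.add_one_le_exp (pr * (1 / c - 1))
      have he : pr * (1 / c - 1) + 1 = pr / c + (1 - pr) := by field_simp; ring
      linarith
    calc (pr / c + (1 - pr)) ^ F.card ≤ (Real.exp (pr * (1 / c - 1))) ^ F.card :=
          pow_le_pow_left₀ hx0 hb _
      _ = Real.exp ((F.card : ℝ) * (pr * (1 / c - 1))) := (Real.exp_nat_mul _ _).symm
  have hlog : Real.log c ≤ (c - c⁻¹) / 2 := by
    have h1 : 0 < Real.log c := Real.log_pos hc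
    have h2 := (Real.self_lt_sinh_iff.mpr h1).le
    rwa [Real.sinh_eq, Real.exp_log hc0, Real.exp_neg, Real.exp_log hc0] at h2
  have hcq : c ^ q = Real.exp ((q : ℝ) * Real.log c) := by
    rw [Real.exp_nat_mul, Real.exp_log hc0]
  have hfm : (F.card : ℝ) * (pr * (1 / c - 1)) = (q : ℝ) - c * q := by
    have : (F.card : ℝ) * (pr * (1 / c - 1)) = ((F.card : ℝ) * pr) * (1 / c - 1) := by ring
    rw [this, hmp]; field_simp
  have hfinal : (q : ℝ) * Real.log c + ((q : ℝ) - c * q)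
      ≤ -((q : ℝ) * (c - 1) ^ 2 / (2 * c)) := by
    have hq0 : (0 : ℝ) ≤ q := Nat.cast_nonneg q
    have hkey : Real.log c + 1 - c ≤ -((c - 1) ^ 2 / (2 * c)) := by
      have heq : (c - c⁻¹) / 2 + 1 - c = -((c - 1) ^ 2 / (2 * c)) := by
        field_simp; ring
      linarith
    have := mul_le_mul_of_nonneg_left hkey hq0
    calc (q : ℝ) * Real.log c + ((q : ℝ) - c * q) = (q : ℝ) * (Real.log c + 1 - c) := by ring
      _ ≤ (q : ℝ) * (-((c - 1) ^ 2 / (2 * c))) := this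
      _ = -((q : ℝ) * (c - 1) ^ 2 / (2 * c)) := by ring
  calc ∑ T ∈ F.powerset.filter (fun T => T.card < q),
      pr ^ T.card * (1 - pr) ^ (F.card - T.card)
      ≤ c ^ q * (pr / c + (1 - pr)) ^ F.card := by rw [← step2]; exact step1
    _ ≤ c ^ q * Real.exp ((F.card : ℝ) * (pr * (1 / c - 1))) := by
        apply mul_le_mul_of_nonneg_left step3; positivity
    _ = Real.exp ((q : ℝ) * Real.log c + ((q : ℝ) - c * q)) := by
        rw [hcq, hfm, ← Real.exp_add]
    _ ≤ Real.exp (-((q : ℝ) * (c - 1) ^ 2 / (2 * c))) := Real.exp_le_exp.mpr hfinal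


open Finset in
lemma count_subsets_mem {n s : ℕ} (hs : 0 < s) (j : Fin n) :
    ((Finset.powersetCard s (Finset.univ : Finset (Fin n))).filter (fun A => j ∈ A)).card
      = (n - 1).choose (s - 1) := by
  classical
  have himg : (Finset.powersetCard s (Finset.univ : Finset (Fin n))).filter (fun A => j ∈ A)
      = (Finset.powersetCard (s - 1) ((Finset.univ : Finset (Fin n)).erase j)).image
          (insert j) := by
    ext A
    simp only [mem_filter, mem_powersetCard, mem_image]
    constructor
    · rintro ⟨⟨-, hcard⟩, hj⟩
      refine ⟨A.erase j, ⟨?_, ?_⟩, ?_⟩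
      · exact erase_subset_erase j (subset_univ A)
      · rw [card_erase_of_mem hj, hcard]
      · exact insert_erase hj
    · rintro ⟨B, ⟨hBsub, hBcard⟩, rfl⟩
      have hjB : j ∉ B := fun h => (notMem_erase j _) (hBsub h)
      refine ⟨⟨subset_univ _, ?_⟩, mem_insert_self _ _⟩
      rw [card_insert_of_notMem hjB, hBcard]
      omega
  rw [himg, card_image_of_injOn, card_powersetCard, card_erase_of_mem (mem_univ j),
    card_univ, Fintype.card_fin]
  intro B₁ h₁ B₂ h₂ h
  have hj₁ : j ∉ B₁ := fun hj => (notMem_erase j _) ((mem_powersetCard.mp h₁).1 hj)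
  have hj₂ : j ∉ B₂ := fun hj => (notMem_erase j _) ((mem_powersetCard.mp h₂).1 hj)
  rw [← erase_insert hj₁, ← erase_insert hj₂, h]

/-- Quorum formation bound: if each of the `n - f` correct replicas independently
sends messages to a uniformly random sample of `s = o·q` distinct replicas and
`n < o(n-f)`, then a fixed replica `j` receives messages from at least `q` correct
replicas with probability at least `1 - exp(-q(c-1)²/(2c))`, `c = o(n-f)/n`. -/
theorem stmt_9 {Ω : Type*} [MeasureSpace Ω] [IsProbabilityMeasure (ℙ : Measure Ω)]
    (n f q s : ℕ) (o : ℝ) (ho : 1 < o) (hf : 3 * f < n)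
    (hs : (s : ℝ) = o * q) (hno : (n : ℝ) < o * ((n : ℝ) - f))
    (C : Finset (Fin n)) (hC : C.card = n - f) (j : Fin n)
    (S : Fin n → Ω → Finset (Fin n))
    (hindep : iIndepFun S ℙ)
    (hunif : ∀ i ∈ C, ∀ A : Finset (Fin n), A.card = s →
      ℙ {ω | S i ω = A} = 1 / (n.choose s : ENNReal))
    (hsize : ∀ i ∈ C, ℙ {ω | (S i ω).card = s} = 1)
    (c : ℝ) (hc : c = o * ((n : ℝ) - f) / n) :
    1 - Real.exp (-((q : ℝ) * (c - 1) ^ 2 / (2 * c)))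
      ≤ (ℙ {ω | q ≤ (C.filter fun i => j ∈ S i ω).card}).toReal := by
  classical
  have hn : 0 < n := by omega
  have hfn : f < n := by omega
  rcases Nat.eq_zero_or_pos q with hq0 | hq
  · subst hq0
    simp only [Nat.cast_zero, zero_mul, zero_div, neg_zero, Real.exp_zero, sub_self]
    exact ENNReal.toReal_nonneg
  have hCne : C.Nonempty := Finset.card_pos.mp (by omega)
  obtain ⟨i0, hi0⟩ := hCne
  -- sample size is at most n
  have hsn : s ≤ n := by
    by_contra h
    push_neg at h
    have hemp : {ω : Ω | (S i0 ω).card = s} = ∅ := by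
      ext ω
      simp only [Set.mem_setOf_eq, Set.mem_empty_iff_false, iff_false]
      intro hcard
      have h2 := Finset.card_le_univ (S i0 ω)
      rw [hcard] at h2
      simp only [Finset.card_univ, Fintype.card_fin] at h2
      omega
    have h1 := hsize i0 hi0
    rw [hemp, measure_empty] at h1
    exact zero_ne_one h1
  have hnR : (0:ℝ) < n := by exact_mod_cast hn
  have hqR : (1:ℝ) ≤ q := by exact_mod_cast hq
  have hs0 : 0 < s := by
    have : (0:ℝ) < s := by rw [hs]; nlinarith
    exact_mod_cast this
  have hc1 : 1 < c := by
    rw [hc, lt_div_iff₀ hnR]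
    linarith
  -- counting
  set cns := n.choose s with hcns
  have hcns0 : 0 < cns := Nat.choose_pos hsn
  set k₁ := (n - 1).choose (s - 1) with hk₁def
  have hnk : n * k₁ = cns * s := by
    have h := Nat.add_one_mul_choose_eq (n - 1) (s - 1)
    have e1 : n - 1 + 1 = n := by omega
    have e2 : s - 1 + 1 = s := by omega
    simp only [Nat.succ_eq_add_one, e1, e2] at h
    exact h
  have hk₁le : k₁ ≤ cns := by
    have h1 : n * k₁ ≤ n * cns := by
      rw [hnk]
      exact Nat.mul_le_mul_left cns hsn |>.trans_eq (Nat.mul_comm cns n)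
    exact Nat.le_of_mul_le_mul_left h1 hn
  have hU1card : ((Finset.powersetCard s (Finset.univ : Finset (Fin n))).filter
      (fun A => j ∈ A)).card = k₁ := count_subsets_mem hs0 j
  have hUcard : (Finset.powersetCard s (Finset.univ : Finset (Fin n))).card = cns := by
    rw [Finset.card_powersetCard, Finset.card_univ, Fintype.card_fin]
  have hU2card : ((Finset.powersetCard s (Finset.univ : Finset (Fin n))).filter
      (fun A => j ∉ A)).card = cns - k₁ := by
    have h := Finset.card_filter_add_card_filter_not
      (s := Finset.powersetCard s (Finset.univ : Finset (Fin n))) (p := fun A => j ∈ A)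
    rw [hU1card, hUcard] at h
    omega
  -- probabilities of the two basic events, for each correct replica
  set p₁ : ENNReal := (k₁ : ENNReal) / (cns : ENNReal) with hp₁def
  set p₂ : ENNReal := ((cns - k₁ : ℕ) : ENNReal) / (cns : ENNReal) with hp₂def
  have hcnsE0 : (cns : ENNReal) ≠ 0 := by exact_mod_cast hcns0.ne'
  have hcnsET : (cns : ENNReal) ≠ ⊤ := ENNReal.natCast_ne_top cns
  have hp₁T : p₁ ≠ ⊤ := (ENNReal.div_lt_top (ENNReal.natCast_ne_top _) hcnsE0).ne
  have hp₂T : p₂ ≠ ⊤ := (ENNReal.div_lt_top (ENNReal.natCast_ne_top _) hcnsE0).ne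
  have hsum1 : p₁ + p₂ = 1 := by
    rw [hp₁def, hp₂def, ENNReal.div_add_div_same]
    rw [show ((k₁ : ENNReal) + ((cns - k₁ : ℕ) : ENNReal)) = (cns : ENNReal) by
      rw [← Nat.cast_add]; congr 1; omega]
    exact ENNReal.div_self hcnsE0 hcnsET
  have hDbound : ∀ i ∈ C, ∀ (P : Finset (Fin n) → Prop) (_ : DecidablePred P),
      ℙ {ω | (S i ω).card = s ∧ P (S i ω)}
        ≤ ((((Finset.powersetCard s (Finset.univ : Finset (Fin n))).filter
            (fun A => P A)).card : ENNReal)) / (cns : ENNReal) := by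
    intro i hi P hdec
    have hsub : {ω | (S i ω).card = s ∧ P (S i ω)} =
        ⋃ A ∈ (Finset.powersetCard s (Finset.univ : Finset (Fin n))).filter (fun A => P A),
          {ω | S i ω = A} := by
      ext ω
      simp only [Set.mem_setOf_eq, Set.mem_iUnion, Finset.mem_filter,
        Finset.mem_powersetCard, exists_prop]
      constructor
      · rintro ⟨hcard, hP⟩
        exact ⟨S i ω, ⟨⟨Finset.subset_univ _, hcard⟩, hP⟩, rfl⟩
      · rintro ⟨A, ⟨⟨-, hcard⟩, hP⟩, hA⟩
        rw [hA]
        exact ⟨hcard, hP⟩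
    rw [hsub]
    refine (measure_biUnion_finset_le _ _).trans ?_
    have hval : ∀ A ∈ (Finset.powersetCard s (Finset.univ : Finset (Fin n))).filter
        (fun A => P A), ℙ {ω | S i ω = A} = 1 / (cns : ENNReal) := by
      intro A hA
      rw [Finset.mem_filter, Finset.mem_powersetCard] at hA
      exact hunif i hi A hA.1.2
    rw [Finset.sum_congr rfl hval, Finset.sum_const, nsmul_eq_mul]
    rw [mul_one_div]
  have hD : ∀ i ∈ C, ℙ {ω | (S i ω).card = s ∧ j ∈ S i ω} = p₁ ∧
      ℙ {ω | (S i ω).card = s ∧ j ∉ S i ω} = p₂ := by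
    intro i hi
    have hb1 := hDbound i hi (fun A => j ∈ A) inferInstance
    have hb2 := hDbound i hi (fun A => j ∉ A) inferInstance
    rw [hU1card] at hb1
    rw [hU2card] at hb2
    have hcup : {ω : Ω | (S i ω).card = s} ⊆
        {ω | (S i ω).card = s ∧ j ∈ S i ω} ∪ {ω | (S i ω).card = s ∧ j ∉ S i ω} := by
      intro ω hω
      by_cases hj : j ∈ S i ω
      · exact Or.inl ⟨hω, hj⟩
      · exact Or.inr ⟨hω, hj⟩
    have hone : (1 : ENNReal) ≤ ℙ {ω | (S i ω).card = s ∧ j ∈ S i ω}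
        + ℙ {ω | (S i ω).card = s ∧ j ∉ S i ω} := by
      rw [← hsize i hi]
      exact (measure_mono hcup).trans (measure_union_le _ _)
    constructor
    · refine le_antisymm hb1 ?_
      have h1 : (1 : ENNReal) - p₂ ≤ ℙ {ω | (S i ω).card = s ∧ j ∈ S i ω} := by
        rw [tsub_le_iff_right]
        exact hone.trans (add_le_add_right hb2 _)
      have h2 : (1 : ENNReal) - p₂ = p₁ := by
        rw [← hsum1, ENNReal.add_sub_cancel_right hp₂T]
      rwa [h2] at h1
    · refine le_antisymm hb2 ?_
      have h1 : (1 : ENNReal) - p₁ ≤ ℙ {ω | (S i ω).card = s ∧ j ∉ S i ω} := by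
        rw [tsub_le_iff_right]
        refine hone.trans ?_
        rw [add_comm]
        exact add_le_add_right hb1 _
      have h2 : (1 : ENNReal) - p₁ = p₂ := by
        rw [← hsum1, add_comm, ENNReal.add_sub_cancel_right hp₁T]
      rwa [h2] at h1
  -- cylinder probabilities via independence
  have hcyl : ∀ T ∈ C.powerset,
      ℙ (⋂ i ∈ C, if i ∈ T then {ω | (S i ω).card = s ∧ j ∈ S i ω}
          else {ω | (S i ω).card = s ∧ j ∉ S i ω})
        = p₁ ^ T.card * p₂ ^ (C.card - T.card) := by
    intro T hT
    rw [Finset.mem_powerset] at hT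
    rw [hindep.meas_biInter (S := C) ?_]
    · have hf1 : C.filter (· ∈ T) = T := by
        rw [Finset.filter_mem_eq_inter, Finset.inter_eq_right.mpr hT]
      have hf2 : C.filter (fun i => ¬ i ∈ T) = C \ T := (Finset.sdiff_eq_filter C T).symm
      have hprod1 : (∏ i ∈ C.filter (· ∈ T),
          ℙ (if i ∈ T then {ω | (S i ω).card = s ∧ j ∈ S i ω}
            else {ω | (S i ω).card = s ∧ j ∉ S i ω})) = ∏ _i ∈ T, p₁ :=
        Finset.prod_congr hf1 (fun i hi => by
          rw [if_pos hi]; exact (hD i (hT hi)).1)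
      have hprod2 : (∏ i ∈ C.filter (fun i => ¬ i ∈ T),
          ℙ (if i ∈ T then {ω | (S i ω).card = s ∧ j ∈ S i ω}
            else {ω | (S i ω).card = s ∧ j ∉ S i ω})) = ∏ _i ∈ C \ T, p₂ :=
        Finset.prod_congr hf2 (fun i hi => by
          have hi' := Finset.mem_sdiff.mp hi
          rw [if_neg hi'.2]; exact (hD i hi'.1).2)
      calc (∏ i ∈ C, ℙ (if i ∈ T then {ω | (S i ω).card = s ∧ j ∈ S i ω}
            else {ω | (S i ω).card = s ∧ j ∉ S i ω}))
          = (∏ i ∈ C.filter (· ∈ T),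
              ℙ (if i ∈ T then {ω | (S i ω).card = s ∧ j ∈ S i ω}
                else {ω | (S i ω).card = s ∧ j ∉ S i ω})) *
            ∏ i ∈ C.filter (fun i => ¬ i ∈ T),
              ℙ (if i ∈ T then {ω | (S i ω).card = s ∧ j ∈ S i ω}
                else {ω | (S i ω).card = s ∧ j ∉ S i ω}) :=
            (Finset.prod_filter_mul_prod_filter_not C (· ∈ T) _).symm
        _ = (∏ _i ∈ T, p₁) * ∏ _i ∈ C \ T, p₂ := by rw [hprod1, hprod2]
        _ = p₁ ^ T.card * p₂ ^ (C.card - T.card) := by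
            rw [Finset.prod_const, Finset.prod_const, Finset.card_sdiff_of_subset hT]
    · intro i _
      by_cases h : i ∈ T
      · rw [if_pos h]
        exact MeasurableSpace.measurableSet_comap.mpr
          ⟨{A | A.card = s ∧ j ∈ A}, MeasurableSpace.measurableSet_top, rfl⟩
      · rw [if_neg h]
        exact MeasurableSpace.measurableSet_comap.mpr
          ⟨{A | A.card = s ∧ j ∉ A}, MeasurableSpace.measurableSet_top, rfl⟩
  -- the all-samples-have-size-s event has probability one
  have hG : ℙ (⋂ i ∈ C, {ω | (S i ω).card = s}) = 1 := by
    rw [hindep.meas_biInter (S := C) ?_]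
    · exact Finset.prod_eq_one (fun i hi => hsize i hi)
    · intro i _
      exact MeasurableSpace.measurableSet_comap.mpr
        ⟨{A | A.card = s}, MeasurableSpace.measurableSet_top, rfl⟩
  -- covering
  have hcover : (⋂ i ∈ C, {ω | (S i ω).card = s}) ⊆
      {ω | q ≤ (C.filter fun i => j ∈ S i ω).card} ∪
      ⋃ T ∈ C.powerset.filter (fun T => T.card < q),
        (⋂ i ∈ C, if i ∈ T then {ω | (S i ω).card = s ∧ j ∈ S i ω}
          else {ω | (S i ω).card = s ∧ j ∉ S i ω}) := by
    intro ω hω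
    simp only [Set.mem_iInter, Set.mem_setOf_eq] at hω
    by_cases hq' : q ≤ (C.filter fun i => j ∈ S i ω).card
    · exact Or.inl hq'
    · right
      have hTmem : (C.filter fun i' => j ∈ S i' ω) ∈
          C.powerset.filter (fun T => T.card < q) := by
        rw [Finset.mem_filter, Finset.mem_powerset]
        exact ⟨Finset.filter_subset _ _, by omega⟩
      refine Set.mem_biUnion hTmem ?_
      · refine Set.mem_biInter ?_
        intro i hi
        by_cases hmem : i ∈ C.filter fun i' => j ∈ S i' ω
        · rw [if_pos hmem]
          exact ⟨hω i hi, (Finset.mem_filter.mp hmem).2⟩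
        · rw [if_neg hmem]
          refine ⟨hω i hi, fun hj => hmem (Finset.mem_filter.mpr ⟨hi, hj⟩)⟩
  -- the key ENNReal inequality
  have hmain : (1 : ENNReal) ≤ ℙ {ω | q ≤ (C.filter fun i => j ∈ S i ω).card}
      + ∑ T ∈ C.powerset.filter (fun T => T.card < q), p₁ ^ T.card * p₂ ^ (C.card - T.card) := by
    calc (1 : ENNReal) = ℙ (⋂ i ∈ C, {ω | (S i ω).card = s}) := hG.symm
      _ ≤ ℙ ({ω | q ≤ (C.filter fun i => j ∈ S i ω).card} ∪
          ⋃ T ∈ C.powerset.filter (fun T => T.card < q),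
            (⋂ i ∈ C, if i ∈ T then {ω | (S i ω).card = s ∧ j ∈ S i ω}
              else {ω | (S i ω).card = s ∧ j ∉ S i ω})) := measure_mono hcover
      _ ≤ ℙ {ω | q ≤ (C.filter fun i => j ∈ S i ω).card}
          + ℙ (⋃ T ∈ C.powerset.filter (fun T => T.card < q),
            (⋂ i ∈ C, if i ∈ T then {ω | (S i ω).card = s ∧ j ∈ S i ω}
              else {ω | (S i ω).card = s ∧ j ∉ S i ω})) := measure_union_le _ _
      _ ≤ _ := by
          refine add_le_add_right ?_ _
          refine (measure_biUnion_finset_le _ _).trans ?_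
          refine le_of_eq (Finset.sum_congr rfl ?_)
          intro T hT
          exact hcyl T (Finset.mem_filter.mp hT).1
  -- convert to the reals
  set pr : ℝ := (s : ℝ) / n with hprdef
  have hp₁R : p₁.toReal = pr := by
    rw [hp₁def, ENNReal.toReal_div, ENNReal.toReal_natCast, ENNReal.toReal_natCast, hprdef]
    rw [div_eq_div_iff (by exact_mod_cast hcns0.ne' : (cns:ℝ) ≠ 0) hnR.ne']
    have := hnk
    have hcast : (n : ℝ) * k₁ = (cns : ℝ) * s := by exact_mod_cast congrArg (Nat.cast : ℕ → ℝ) hnk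
    linarith
  have hp₂R : p₂.toReal = 1 - pr := by
    rw [hp₂def, ENNReal.toReal_div, ENNReal.toReal_natCast, ENNReal.toReal_natCast]
    rw [Nat.cast_sub hk₁le]
    have hcnsR : (0:ℝ) < cns := by exact_mod_cast hcns0
    rw [sub_div, div_self hcnsR.ne']
    have : (k₁ : ℝ) / cns = pr := by rw [← hp₁R, hp₁def, ENNReal.toReal_div,
      ENNReal.toReal_natCast, ENNReal.toReal_natCast]
    rw [this]
  have hPle1 : ℙ {ω | q ≤ (C.filter fun i => j ∈ S i ω).card} ≤ 1 := prob_le_one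
  have hPT : ℙ {ω | q ≤ (C.filter fun i => j ∈ S i ω).card} ≠ ⊤ :=
    (hPle1.trans_lt ENNReal.one_lt_top).ne
  have hWT : ∀ T ∈ C.powerset.filter (fun T => T.card < q),
      p₁ ^ T.card * p₂ ^ (C.card - T.card) ≠ ⊤ := by
    intro T _
    exact ENNReal.mul_ne_top (ENNReal.pow_ne_top hp₁T) (ENNReal.pow_ne_top hp₂T)
  have hWsum : (∑ T ∈ C.powerset.filter (fun T => T.card < q),
      p₁ ^ T.card * p₂ ^ (C.card - T.card)).toReal
      = ∑ T ∈ C.powerset.filter (fun T => T.card < q),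
        pr ^ T.card * (1 - pr) ^ (C.card - T.card) := by
    rw [ENNReal.toReal_sum hWT]
    refine Finset.sum_congr rfl (fun T _ => ?_)
    rw [ENNReal.toReal_mul, ENNReal.toReal_pow, ENNReal.toReal_pow, hp₁R, hp₂R]
  have hreal : (1 : ℝ) ≤ (ℙ {ω | q ≤ (C.filter fun i => j ∈ S i ω).card}).toReal
      + ∑ T ∈ C.powerset.filter (fun T => T.card < q),
        pr ^ T.card * (1 - pr) ^ (C.card - T.card) := by
    have hfin : ℙ {ω | q ≤ (C.filter fun i => j ∈ S i ω).card}
        + ∑ T ∈ C.powerset.filter (fun T => T.card < q),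
          p₁ ^ T.card * p₂ ^ (C.card - T.card) ≠ ⊤ :=
      ENNReal.add_ne_top.mpr ⟨hPT, (ENNReal.sum_lt_top.mpr
        (fun T hT => (hWT T hT).lt_top)).ne⟩
    have := ENNReal.toReal_mono hfin hmain
    rwa [ENNReal.toReal_one, ENNReal.toReal_add hPT ((ENNReal.sum_lt_top.mpr
      (fun T hT => (hWT T hT).lt_top)).ne), hWsum] at this
  -- apply the Chernoff tail bound
  have hpr0 : 0 ≤ pr := by positivity
  have hpr1 : pr ≤ 1 := by
    rw [hprdef, div_le_one hnR]
    exact_mod_cast hsn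
  have hmp : ((C.card : ℝ)) * pr = c * q := by
    rw [hC, hprdef, Nat.cast_sub hfn.le, hs, hc]
    field_simp
  have hcher := chernoff_tail_aux C q pr c hc1 hpr0 hpr1 hmp
  linarith
end

section
/- Chernoff–Hoeffding bounds under negative association: if $X_1, \dots, X_n$ are $\{0,1\}$-valued negatively associated random variables and $X = \sum_i X_i$, then for $\delta \in (0,1)$, $\Pr(X \le (1-\delta)\mathbb{E}[X]) \le \exp(-\delta^2\mathbb{E}[X]/2)$, and for $\delta \ge 0$, $\Pr(X \ge (1+\delta)\mathbb{E}[X]) \le \exp(-\delta^2\mathbb{E}[X]/(2+\delta))$. -/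
open MeasureTheory ProbabilityTheory
open scoped ProbabilityTheory

private lemma na_log_ge_div (x : ℝ) (hx : 0 ≤ x) : x / (1 + x) ≤ Real.log (1 + x) := by
  have h1 : (0:ℝ) < 1 + x := by linarith
  have h2 := Real.one_sub_inv_le_log_of_pos h1
  have h3 : 1 - (1+x)⁻¹ = x / (1+x) := by field_simp; ring
  linarith [h3 ▸ h2]

private lemma na_upper_log (d : ℝ) (hd : 0 ≤ d) : 2 * d / (2 + d) ≤ Real.log (1 + d) := by
  set φ : ℝ → ℝ := fun x => (2 + x) * Real.log (1 + x) - 2 * x with hφ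
  have hmono : MonotoneOn φ (Set.Ici 0) := by
    have hcont : ContinuousOn φ (Set.Ici 0) := by
      apply ContinuousOn.sub
      · exact (continuousOn_const.add continuousOn_id).mul
          (((continuousOn_const.add continuousOn_id)).log (fun x hx => by
            simp only [Set.mem_Ici] at hx; simp only [Pi.add_apply, id]; positivity))
      · exact continuousOn_const.mul continuousOn_id
    have hderiv : ∀ x ∈ interior (Set.Ici (0:ℝ)), HasDerivAt φ
        (1 * Real.log (1 + x) + (2 + x) * (1 / (1 + x)) - 2 * 1) x := by
      intro x hx
      rw [interior_Ici] at hx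
      have hx0 : (0:ℝ) < x := hx
      have h1 : HasDerivAt (fun y : ℝ => 1 + y) 1 x := (hasDerivAt_id x).const_add 1
      have hlog : HasDerivAt (fun y : ℝ => Real.log (1 + y)) (1 / (1 + x)) x := by
        simpa using h1.log (by positivity)
      have h2 : HasDerivAt (fun y : ℝ => (2 + y) * Real.log (1 + y))
          (1 * Real.log (1 + x) + (2 + x) * (1 / (1 + x))) x :=
        ((hasDerivAt_id x).const_add 2).mul hlog
      exact h2.sub ((hasDerivAt_id x).const_mul 2)
    apply monotoneOn_of_deriv_nonneg (convex_Ici 0) hcont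
    · intro x hx
      exact (hderiv x hx).differentiableAt.differentiableWithinAt
    · intro x hx
      rw [(hderiv x hx).deriv]
      rw [interior_Ici] at hx
      have hx0 : (0:ℝ) < x := hx
      have h1 : (0:ℝ) < 1 + x := by linarith
      have hl := na_log_ge_div x hx0.le
      have he : (2 + x) * (1 / (1 + x)) - 2 * 1 = -(x / (1 + x)) := by
        field_simp; ring
      linarith
  have h0 : φ 0 = 0 := by simp [hφ]
  have hle := hmono (Set.self_mem_Ici) (Set.mem_Ici.mpr hd) hd
  rw [h0] at hle
  have h2 : (0:ℝ) < 2 + d := by linarith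
  rw [div_le_iff₀ h2]
  simp only [hφ] at hle
  linarith

private lemma na_lower_log (d : ℝ) (hd0 : 0 ≤ d) (hd1 : d < 1) :
    d ^ 2 / 2 - d ≤ (1 - d) * Real.log (1 - d) := by
  set ψ : ℝ → ℝ := fun x => (1 - x) * Real.log (1 - x) - x ^ 2 / 2 + x with hψ
  have hmono : MonotoneOn ψ (Set.Ico 0 1) := by
    have hcont : ContinuousOn ψ (Set.Ico 0 1) := by
      apply ContinuousOn.add
      apply ContinuousOn.sub
      · exact (continuousOn_const.sub continuousOn_id).mul
          ((continuousOn_const.sub continuousOn_id).log (fun x hx => by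
            simp only [Set.mem_Ico] at hx; simp only [Pi.sub_apply, id]; nlinarith [hx.2]))
      · exact (continuousOn_pow 2).div_const 2
      · exact continuousOn_id
    have hderiv : ∀ x ∈ interior (Set.Ico (0:ℝ) 1), HasDerivAt ψ
        ((-1) * Real.log (1 - x) + (1 - x) * (-1 / (1 - x)) - x + 1) x := by
      intro x hx
      rw [interior_Ico] at hx
      obtain ⟨hx0, hx1⟩ := hx
      have h1x : (0:ℝ) < 1 - x := by linarith
      have h1 : HasDerivAt (fun y : ℝ => 1 - y) (-1) x := by
        simpa using (hasDerivAt_id x).const_sub 1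
      have hlog : HasDerivAt (fun y : ℝ => Real.log (1 - y)) (-1 / (1 - x)) x :=
        h1.log h1x.ne'
      have h2 : HasDerivAt (fun y : ℝ => (1 - y) * Real.log (1 - y))
          ((-1) * Real.log (1 - x) + (1 - x) * (-1 / (1 - x))) x := h1.mul hlog
      have h3 : HasDerivAt (fun y : ℝ => y ^ 2 / 2) x x := by
        simpa using (hasDerivAt_pow 2 x).div_const 2
      exact (h2.sub h3).add (hasDerivAt_id x)
    apply monotoneOn_of_deriv_nonneg (convex_Ico 0 1) hcont
    · intro x hx
      exact (hderiv x hx).differentiableAt.differentiableWithinAt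
    · intro x hx
      rw [(hderiv x hx).deriv]
      rw [interior_Ico] at hx
      obtain ⟨hx0, hx1⟩ := hx
      have h1x : (0:ℝ) < 1 - x := by linarith
      have hle := Real.log_le_sub_one_of_pos h1x
      have he : (1 - x) * (-1 / (1 - x)) = -1 := by field_simp
      linarith
  have h0 : ψ 0 = 0 := by simp [hψ]
  have hle := hmono (by simp) (Set.mem_Ico.mpr ⟨hd0, hd1⟩) hd0
  rw [h0] at hle
  simp only [hψ] at hle
  linarith

/-- A family of real random variables is negatively associated: for all disjoint
index sets and all coordinatewise non-decreasing bounded measurable test functions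
depending only on those coordinates, `E[f·g] ≤ E[f]·E[g]`. -/
def NegAssoc {Ω ι : Type*} [MeasurableSpace Ω] (μ : Measure Ω)
    (X : ι → Ω → ℝ) : Prop :=
  ∀ (I J : Finset ι), Disjoint I J →
    ∀ f g : (ι → ℝ) → ℝ, Monotone f → Monotone g →
      Measurable f → Measurable g →
      (∃ C, ∀ x, |f x| ≤ C) → (∃ C, ∀ x, |g x| ≤ C) →
      (∀ x y : ι → ℝ, (∀ i ∈ I, x i = y i) → f x = f y) →
      (∀ x y : ι → ℝ, (∀ j ∈ J, x j = y j) → g x = g y) →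
      ∫ ω, f (fun i => X i ω) * g (fun i => X i ω) ∂μ
        ≤ (∫ ω, f (fun i => X i ω) ∂μ) * ∫ ω, g (fun i => X i ω) ∂μ

/-- Chernoff–Hoeffding bounds remain valid for sums of negatively associated
`{0,1}`-valued random variables: both the lower and upper multiplicative tails. -/
theorem stmt_18 {Ω : Type*} [MeasureSpace Ω] [IsProbabilityMeasure (ℙ : Measure Ω)]
    (n : ℕ) (X : Fin n → Ω → ℝ)
    (hmeas : ∀ i, Measurable (X i))
    (h01 : ∀ i ω, X i ω = 0 ∨ X i ω = 1)
    (hNA : NegAssoc ℙ X) :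
    (∀ δ : ℝ, 0 < δ → δ < 1 →
      (ℙ {ω | ∑ i, X i ω ≤ (1 - δ) * ∑ i, ∫ ω', X i ω'}).toReal
        ≤ Real.exp (-δ ^ 2 * (∑ i, ∫ ω', X i ω') / 2))
    ∧ (∀ δ : ℝ, 0 ≤ δ →
      (ℙ {ω | (1 + δ) * ∑ i, ∫ ω', X i ω' ≤ ∑ i, X i ω}).toReal
        ≤ Real.exp (-δ ^ 2 * (∑ i, ∫ ω', X i ω') / (2 + δ))) := by
  classical
  have hX0 : ∀ i ω, 0 ≤ X i ω := by
    intro i ω; rcases h01 i ω with h | h <;> simp [h]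
  have hX1 : ∀ i ω, X i ω ≤ 1 := by
    intro i ω; rcases h01 i ω with h | h <;> simp [h]
  have hXint : ∀ i, Integrable (X i) ℙ := by
    intro i
    refine (integrable_const (1:ℝ)).mono' (hmeas i).aestronglyMeasurable ?_
    filter_upwards with ω
    rw [Real.norm_eq_abs, abs_of_nonneg (hX0 i ω)]
    exact hX1 i ω
  set M : ℝ := ∑ i, ∫ ω', X i ω' with hM
  have hM0 : 0 ≤ M := Finset.sum_nonneg fun i _ => integral_nonneg fun ω => hX0 i ω
  -- the clamp function
  set c : ℝ → ℝ := fun r => max 0 (min r 1) with hc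
  have hcmono : Monotone c := monotone_const.max (monotone_id.min monotone_const)
  have hcmeas : Measurable c := measurable_const.max (measurable_id.min measurable_const)
  have hc0 : ∀ r, 0 ≤ c r := fun r => le_max_left _ _
  have hc1 : ∀ r, c r ≤ 1 := fun r => max_le zero_le_one (min_le_right _ _)
  have hcX : ∀ i ω, c (X i ω) = X i ω := by
    intro i ω; rcases h01 i ω with h | h <;> simp [hc, h]
  -- the test functions
  set F : Finset (Fin n) → ℝ → (Fin n → ℝ) → ℝ :=
    fun s t x => Real.exp (t * ∑ i ∈ s, c (x i)) with hF
  have hFmeas : ∀ s t, Measurable (F s t) := by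
    intro s t
    exact Real.measurable_exp.comp (measurable_const.mul
      (Finset.measurable_sum s fun i _ => hcmeas.comp (measurable_pi_apply i)))
  have hFbd : ∀ s t x, |F s t x| ≤ Real.exp (|t| * n) := by
    intro s t x
    rw [abs_of_pos (Real.exp_pos _), Real.exp_le_exp]
    have hs0 : 0 ≤ ∑ i ∈ s, c (x i) := Finset.sum_nonneg fun i _ => hc0 _
    have hsn : ∑ i ∈ s, c (x i) ≤ n := by
      have h1 : ∑ i ∈ s, c (x i) ≤ s.card • (1:ℝ) :=
        Finset.sum_le_card_nsmul _ _ _ fun i _ => hc1 _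
      have h2 : (s.card : ℝ) ≤ n := by
        exact_mod_cast (Finset.card_le_univ s).trans_eq (Finset.card_fin n)
      simpa using h1.trans (by simpa using h2)
    calc t * ∑ i ∈ s, c (x i) ≤ |t| * ∑ i ∈ s, c (x i) :=
          mul_le_mul_of_nonneg_right (le_abs_self t) hs0
      _ ≤ |t| * n := mul_le_mul_of_nonneg_left hsn (abs_nonneg t)
  have hFmono : ∀ s t, 0 ≤ t → Monotone (F s t) := by
    intro s t ht x y hxy
    apply Real.exp_le_exp.mpr
    exact mul_le_mul_of_nonneg_left
      (Finset.sum_le_sum fun i _ => hcmono (hxy i)) ht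
  have hFanti : ∀ s t, t ≤ 0 → Antitone (F s t) := by
    intro s t ht x y hxy
    apply Real.exp_le_exp.mpr
    exact mul_le_mul_of_nonpos_left
      (Finset.sum_le_sum fun i _ => hcmono (hxy i)) ht
  have hFdep : ∀ s t, ∀ x y : Fin n → ℝ, (∀ i ∈ s, x i = y i) → F s t x = F s t y := by
    intro s t x y hxy
    simp only [hF]
    congr 1
    exact congrArg (t * ·) (Finset.sum_congr rfl fun i hi => by rw [hxy i hi])
  have hFX : ∀ s t ω, F s t (fun i => X i ω) = Real.exp (t * ∑ i ∈ s, X i ω) := by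
    intro s t ω
    simp only [hF]
    congr 1
    exact congrArg (t * ·) (Finset.sum_congr rfl fun i _ => hcX i ω)
  -- the negative-association step
  have step : ∀ (t : ℝ) (j : Fin n) (s : Finset (Fin n)), j ∉ s →
      ∫ ω, Real.exp (t * X j ω) * Real.exp (t * ∑ i ∈ s, X i ω)
        ≤ (∫ ω, Real.exp (t * X j ω)) * ∫ ω, Real.exp (t * ∑ i ∈ s, X i ω) := by
    intro t j s hj
    have hdisj : Disjoint ({j} : Finset (Fin n)) s := Finset.disjoint_singleton_left.mpr hj
    have hXj : ∀ ω, F {j} t (fun i => X i ω) = Real.exp (t * X j ω) := by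
      intro ω; rw [hFX]; simp
    rcases le_total 0 t with ht | ht
    · have h := hNA {j} s hdisj (F {j} t) (F s t) (hFmono _ _ ht) (hFmono _ _ ht)
        (hFmeas _ _) (hFmeas _ _) ⟨_, hFbd {j} t⟩ ⟨_, hFbd s t⟩ (hFdep _ _) (hFdep _ _)
      simpa only [hXj, hFX] using h
    · have h := hNA {j} s hdisj (fun x => -F {j} t x) (fun x => -F s t x)
        (fun x y hxy => neg_le_neg (hFanti _ _ ht hxy))
        (fun x y hxy => neg_le_neg (hFanti _ _ ht hxy))
        (hFmeas _ _).neg (hFmeas _ _).neg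
        ⟨_, fun x => (abs_neg _).le.trans (hFbd {j} t x)⟩
        ⟨_, fun x => (abs_neg _).le.trans (hFbd s t x)⟩
        (fun x y hxy => congrArg Neg.neg (hFdep _ _ x y hxy))
        (fun x y hxy => congrArg Neg.neg (hFdep _ _ x y hxy))
      simp only [neg_mul_neg, integral_neg, hXj, hFX] at h
      simpa only [neg_mul_neg] using h
  -- product bound on the MGF
  have key0 : ∀ (t : ℝ) (s : Finset (Fin n)),
      ∫ ω, Real.exp (t * ∑ i ∈ s, X i ω) ≤ ∏ i ∈ s, ∫ ω, Real.exp (t * X i ω) := by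
    intro t s
    induction s using Finset.induction_on with
    | empty => simp
    | @insert j s hj ih =>
      rw [Finset.prod_insert hj]
      have h1 : ∀ ω, Real.exp (t * ∑ i ∈ insert j s, X i ω)
          = Real.exp (t * X j ω) * Real.exp (t * ∑ i ∈ s, X i ω) := by
        intro ω; rw [Finset.sum_insert hj, mul_add, Real.exp_add]
      calc ∫ ω, Real.exp (t * ∑ i ∈ insert j s, X i ω)
          = ∫ ω, Real.exp (t * X j ω) * Real.exp (t * ∑ i ∈ s, X i ω) := by
            simp only [h1]
        _ ≤ (∫ ω, Real.exp (t * X j ω)) * ∫ ω, Real.exp (t * ∑ i ∈ s, X i ω) :=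
            step t j s hj
        _ ≤ (∫ ω, Real.exp (t * X j ω)) * ∏ i ∈ s, ∫ ω, Real.exp (t * X i ω) :=
            mul_le_mul_of_nonneg_left ih (integral_nonneg fun ω => (Real.exp_pos _).le)
  -- per-variable MGF bound
  have hvar : ∀ (t : ℝ) (i : Fin n),
      ∫ ω, Real.exp (t * X i ω) ≤ Real.exp ((Real.exp t - 1) * ∫ ω', X i ω') := by
    intro t i
    have he : ∀ ω, Real.exp (t * X i ω) = 1 + (Real.exp t - 1) * X i ω := by
      intro ω; rcases h01 i ω with h | h <;> simp [h]
    have heq : ∫ ω, Real.exp (t * X i ω)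
        = 1 + (Real.exp t - 1) * ∫ ω', X i ω' := by
      simp only [he]
      rw [integral_add (integrable_const 1) ((hXint i).const_mul _),
        integral_const, integral_const_mul]
      simp
    rw [heq]
    linarith [Real.add_one_le_exp ((Real.exp t - 1) * ∫ ω', X i ω')]
  -- global MGF bound
  have key : ∀ t : ℝ, ∫ ω, Real.exp (t * ∑ i, X i ω) ≤ Real.exp ((Real.exp t - 1) * M) := by
    intro t
    calc ∫ ω, Real.exp (t * ∑ i, X i ω)
        ≤ ∏ i, ∫ ω, Real.exp (t * X i ω) := key0 t Finset.univ
      _ ≤ ∏ i, Real.exp ((Real.exp t - 1) * ∫ ω', X i ω') :=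
          Finset.prod_le_prod (fun i _ => integral_nonneg fun ω => (Real.exp_pos _).le)
            (fun i _ => hvar t i)
      _ = Real.exp ((Real.exp t - 1) * M) := by
          rw [← Real.exp_sum, hM, Finset.mul_sum]
  -- integrability of the exponential of the sum
  have hSmeas : Measurable (fun ω => ∑ i, X i ω) :=
    Finset.measurable_sum Finset.univ fun i _ => hmeas i
  have hint : ∀ t : ℝ, Integrable (fun ω => Real.exp (t * ∑ i, X i ω)) ℙ := by
    intro t
    refine (integrable_const (Real.exp (|t| * n))).mono'
      ((Real.measurable_exp.comp (measurable_const.mul hSmeas)).aestronglyMeasurable) ?_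
    filter_upwards with ω
    rw [Real.norm_eq_abs, abs_of_pos (Real.exp_pos _), Real.exp_le_exp]
    have hs0 : 0 ≤ ∑ i, X i ω := Finset.sum_nonneg fun i _ => hX0 i ω
    have hsn : ∑ i, X i ω ≤ n := by
      have h1 : ∑ i, X i ω ≤ (Finset.univ : Finset (Fin n)).card • (1:ℝ) :=
        Finset.sum_le_card_nsmul _ _ _ fun i _ => hX1 i ω
      simpa using h1
    calc t * ∑ i, X i ω ≤ |t| * ∑ i, X i ω :=
          mul_le_mul_of_nonneg_right (le_abs_self t) hs0
      _ ≤ |t| * n := mul_le_mul_of_nonneg_left hsn (abs_nonneg t)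
  have hmgf : ∀ t : ℝ, mgf (fun ω => ∑ i, X i ω) ℙ t ≤ Real.exp ((Real.exp t - 1) * M) :=
    fun t => key t
  constructor
  · -- lower tail
    intro δ hδ0 hδ1
    have h1δ : (0:ℝ) < 1 - δ := by linarith
    set t : ℝ := Real.log (1 - δ) with htdef
    have ht : t ≤ 0 := Real.log_nonpos (by linarith) (by linarith)
    have het : Real.exp t = 1 - δ := Real.exp_log h1δ
    have hmar := measure_le_le_exp_mul_mgf (μ := ℙ) (X := fun ω => ∑ i, X i ω)
      ((1 - δ) * M) ht (hint t)
    refine le_trans hmar ?_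
    calc Real.exp (-t * ((1 - δ) * M)) * mgf (fun ω => ∑ i, X i ω) ℙ t
        ≤ Real.exp (-t * ((1 - δ) * M)) * Real.exp ((Real.exp t - 1) * M) :=
          mul_le_mul_of_nonneg_left (hmgf t) (Real.exp_pos _).le
      _ = Real.exp (-t * ((1 - δ) * M) + (Real.exp t - 1) * M) := (Real.exp_add _ _).symm
      _ ≤ Real.exp (-δ ^ 2 * M / 2) := by
          rw [Real.exp_le_exp, het]
          have hs := na_lower_log δ hδ0.le hδ1
          nlinarith [mul_le_mul_of_nonneg_right hs hM0]
  · -- upper tail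
    intro δ hδ
    set t : ℝ := Real.log (1 + δ) with htdef
    have h1δ : (0:ℝ) < 1 + δ := by linarith
    have ht : 0 ≤ t := Real.log_nonneg (by linarith)
    have het : Real.exp t = 1 + δ := Real.exp_log h1δ
    have hmar := measure_ge_le_exp_mul_mgf (μ := ℙ) (X := fun ω => ∑ i, X i ω)
      ((1 + δ) * M) ht (hint t)
    refine le_trans hmar ?_
    calc Real.exp (-t * ((1 + δ) * M)) * mgf (fun ω => ∑ i, X i ω) ℙ t
        ≤ Real.exp (-t * ((1 + δ) * M)) * Real.exp ((Real.exp t - 1) * M) :=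
          mul_le_mul_of_nonneg_left (hmgf t) (Real.exp_pos _).le
      _ = Real.exp (-t * ((1 + δ) * M) + (Real.exp t - 1) * M) := (Real.exp_add _ _).symm
      _ ≤ Real.exp (-δ ^ 2 * M / (2 + δ)) := by
          rw [Real.exp_le_exp, het]
          have h2 : (0:ℝ) < 2 + δ := by linarith
          have hs : δ - (1 + δ) * Real.log (1 + δ) ≤ -δ ^ 2 / (2 + δ) := by
            have hl := na_upper_log δ hδ
            rw [div_le_iff₀ h2] at hl
            rw [le_div_iff₀ h2]
            nlinarith [mul_le_mul_of_nonneg_left hl (show (0:ℝ) ≤ 1 + δ by linarith)]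
          have hs' := mul_le_mul_of_nonneg_right hs hM0
          have hd : -δ ^ 2 / (2 + δ) * M = -δ ^ 2 * M / (2 + δ) := by ring
          nlinarith [hs', hd ▸ hs']
end
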